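/- arXiv:1009.1133 — 7 statements merged into one kernel-verified Lean document; each statement's English description precedes it below -/
import Mathlib

section
/- Let G(ζ,ω) = log(|φ(ζ) - φ(ω)|/|1 - φ(ζ)·conj(φ(ω))|) be the Green function of the disk {ζ : |ζ - ζ₀| ≤ R}, where φ(ζ) = (ζ - ζ₀)/R. Then for distinct ζ, ω in this disk, |∇_ζ G(ζ,ω)| ≤ 2/|ζ - ω|. -/
open Complex ContinuousLinearMap

noncomputable def auxL (c w : ℂ) : ℂ →L[ℝ] ℝ :=
  Complex.reCLM.comp ((ContinuousLinearMap.smulRight (1 : ℂ →L[ℂ] ℂ) (c / w)).restrictScalars ℝ)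

lemma auxL_norm_le (c w : ℂ) : ‖auxL c w‖ ≤ ‖c‖ / ‖w‖ := by
  have h1 : ‖auxL c w‖ ≤ ‖Complex.reCLM‖ * ‖(ContinuousLinearMap.smulRight (1 : ℂ →L[ℂ] ℂ) (c / w)).restrictScalars ℝ‖ :=
    ContinuousLinearMap.opNorm_comp_le _ _
  have h2 : ‖(ContinuousLinearMap.smulRight (1 : ℂ →L[ℂ] ℂ) (c / w)).restrictScalars ℝ‖
      = ‖ContinuousLinearMap.smulRight (1 : ℂ →L[ℂ] ℂ) (c / w)‖ := rfl
  have h3 : ‖ContinuousLinearMap.smulRight (1 : ℂ →L[ℂ] ℂ) (c / w)‖ = ‖(1 : ℂ →L[ℂ] ℂ)‖ * ‖c / w‖ :=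
    ContinuousLinearMap.norm_smulRight_apply _ _
  have h4 : ‖Complex.reCLM‖ = 1 := Complex.reCLM_norm
  calc ‖auxL c w‖ ≤ _ := h1
    _ = ‖c / w‖ := by rw [h2, h3, h4, norm_one]; ring
    _ = ‖c‖ / ‖w‖ := by rw [norm_div]

lemma aux_deriv (c d z : ℂ) (hz : c * z + d ≠ 0) :
    HasFDerivAt (fun ξ : ℂ => Real.log (‖c * ξ + d‖)) (auxL c (c * z + d)) z := by
  set w := c * z + d with hw
  have h1 : HasDerivAt (fun ξ : ℂ => (c * ξ + d) / w) (c / w) z := by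
    simpa using (((hasDerivAt_id z).const_mul c).add_const d).div_const w
  have hmem : ((c * z + d) / w) ∈ Complex.slitPlane := by
    rw [← hw, div_self hz]; exact Complex.one_mem_slitPlane
  have hlog : HasDerivAt Complex.log ((c * z + d) / w)⁻¹ ((fun ξ : ℂ => (c * ξ + d) / w) z) :=
    Complex.hasDerivAt_log hmem
  have hcomp : HasDerivAt (fun ξ : ℂ => Complex.log ((c * ξ + d) / w)) (((c*z+d)/w)⁻¹ * (c / w)) z :=
    hlog.comp (h := fun ξ : ℂ => (c * ξ + d) / w) z h1
  have hone : ((c*z+d)/w)⁻¹ * (c / w) = c / w := by rw [← hw, div_self hz]; simp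
  rw [hone] at hcomp
  have hre : HasFDerivAt (fun ξ : ℂ => (Complex.log ((c * ξ + d) / w)).re + Real.log (‖w‖))
      (auxL c w) z := by
    have := (Complex.reCLM.hasFDerivAt.comp z (hcomp.hasFDerivAt.restrictScalars ℝ))
    exact this.add_const _
  refine hre.congr_of_eventuallyEq ?_
  have hopen : IsOpen {ξ : ℂ | c * ξ + d ≠ 0} := isOpen_ne.preimage (by continuity)
  filter_upwards [hopen.mem_nhds hz] with ξ hξ
  have hwne : ‖w‖ ≠ 0 := by simpa using hz
  have hξne : ‖c * ξ + d‖ ≠ 0 := by simpa using hξ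
  rw [Complex.log_re, norm_div, Real.log_div hξne hwne]
  ring

lemma key_ineq (a b : ℂ) (ha : ‖a‖ ≤ 1) (hb : ‖b‖ ≤ 1) :
    ‖a - b‖ ≤ ‖1 - a * (starRingEnd ℂ) b‖ := by
  have hsq : Complex.normSq (1 - a * (starRingEnd ℂ) b)
      = Complex.normSq (a - b) + (1 - Complex.normSq a) * (1 - Complex.normSq b) := by
    simp [Complex.normSq_apply, Complex.sub_re, Complex.sub_im, Complex.mul_re, Complex.mul_im,
      Complex.conj_re, Complex.conj_im, Complex.one_re, Complex.one_im]
    ring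
  have ha' : Complex.normSq a ≤ 1 := by
    have := Complex.sq_norm a
    nlinarith [norm_nonneg a]
  have hb' : Complex.normSq b ≤ 1 := by
    have := Complex.sq_norm b
    nlinarith [norm_nonneg b]
  rw [Complex.norm_def, Complex.norm_def]
  apply Real.sqrt_le_sqrt
  nlinarith

/-- Gradient estimate for the Green function
`G(ζ,ω) = log(|φ(ζ)-φ(ω)|/|1-φ(ζ) conj(φ(ω))|)`, `φ(ζ) = (ζ-ζ₀)/R`, of the disk
`{ζ : |ζ-ζ₀| ≤ R}`:  `|∇_ζ G(ζ,ω)| ≤ 2/|ζ-ω|` for distinct `ζ, ω` in the disk. -/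
theorem grad_green_disk_bound (ζ₀ : ℂ) (R : ℝ) (hR : 0 < R) (ζ ω : ℂ)
    (hζ : ‖ζ - ζ₀‖ ≤ R) (hω : ‖ω - ζ₀‖ ≤ R) (hne : ζ ≠ ω) :
    ‖fderiv ℝ (fun ξ : ℂ =>
        Real.log (‖(ξ - ζ₀) / R - (ω - ζ₀) / R‖ /
          ‖1 - (ξ - ζ₀) / R * (starRingEnd ℂ) ((ω - ζ₀) / R)‖)) ζ‖
      ≤ 2 / ‖ζ - ω‖ := by
  have hRC : (R : ℂ) ≠ 0 := Complex.ofReal_ne_zero.mpr hR.ne'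
  set b : ℂ := (ω - ζ₀) / R with hbdef
  set c₁ : ℂ := (R : ℂ)⁻¹ with hc₁
  set d₁ : ℂ := -(ζ₀ / R) - b with hd₁
  set c₂ : ℂ := -((starRingEnd ℂ) b) / R with hc₂
  set d₂ : ℂ := 1 + ζ₀ * (starRingEnd ℂ) b / R with hd₂
  have hN : ∀ ξ : ℂ, c₁ * ξ + d₁ = (ξ - ζ₀) / R - (ω - ζ₀) / R := by
    intro ξ; rw [hc₁, hd₁, hbdef]; field_simp; ring
  have hD : ∀ ξ : ℂ, c₂ * ξ + d₂ = 1 - (ξ - ζ₀) / R * (starRingEnd ℂ) ((ω - ζ₀) / R) := by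
    intro ξ; rw [hc₂, hd₂, hbdef]; field_simp; ring
  -- nonvanishing at ζ
  have habs_ne : ‖ζ - ω‖ ≠ 0 := by
    simpa [sub_eq_zero] using hne
  have habs_pos : 0 < ‖ζ - ω‖ := (norm_nonneg _).lt_of_ne' habs_ne
  have hw₁val : c₁ * ζ + d₁ = (ζ - ω) / R := by rw [hN]; field_simp; ring
  have hw₁ : c₁ * ζ + d₁ ≠ 0 := by
    rw [hw₁val]; exact div_ne_zero (sub_ne_zero.mpr hne) hRC
  have hw₁abs : ‖c₁ * ζ + d₁‖ = ‖ζ - ω‖ / R := by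
    rw [hw₁val, norm_div, Complex.norm_real, Real.norm_eq_abs, abs_of_pos hR]
  have ha1 : ‖(ζ - ζ₀) / R‖ ≤ 1 := by
    rw [norm_div, Complex.norm_real, Real.norm_eq_abs, abs_of_pos hR, div_le_one hR]; exact hζ
  have hb1 : ‖b‖ ≤ 1 := by
    rw [hbdef, norm_div, Complex.norm_real, Real.norm_eq_abs, abs_of_pos hR, div_le_one hR]; exact hω
  have hkey : ‖ζ - ω‖ / R ≤ ‖c₂ * ζ + d₂‖ := by
    have h := key_ineq ((ζ - ζ₀) / R) b ha1 hb1
    have hdiff : (ζ - ζ₀) / R - b = (ζ - ω) / R := by rw [hbdef]; field_simp; ring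
    rw [hdiff, norm_div, Complex.norm_real, Real.norm_eq_abs, abs_of_pos hR] at h
    rw [hD]
    exact h
  have hw₂ : c₂ * ζ + d₂ ≠ 0 := by
    intro h0
    rw [h0, norm_zero] at hkey
    have : ‖ζ - ω‖ / R > 0 := div_pos habs_pos hR
    linarith
  -- the derivative
  have hder := (aux_deriv c₁ d₁ ζ hw₁).sub (aux_deriv c₂ d₂ ζ hw₂)
  have hcont : ∀ c d : ℂ, Continuous fun ξ : ℂ => c * ξ + d := fun c d =>
    (continuous_const.mul continuous_id).add continuous_const
  have hopen : IsOpen {ξ : ℂ | c₁ * ξ + d₁ ≠ 0 ∧ c₂ * ξ + d₂ ≠ 0} :=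
    (isOpen_ne.preimage (hcont c₁ d₁)).inter (isOpen_ne.preimage (hcont c₂ d₂))
  have heq : (fun ξ : ℂ =>
        Real.log (‖(ξ - ζ₀) / R - (ω - ζ₀) / R‖ /
          ‖1 - (ξ - ζ₀) / R * (starRingEnd ℂ) ((ω - ζ₀) / R)‖))
      =ᶠ[nhds ζ] (fun ξ : ℂ => Real.log (‖c₁ * ξ + d₁‖) - Real.log (‖c₂ * ξ + d₂‖)) := by
    filter_upwards [hopen.mem_nhds ⟨hw₁, hw₂⟩] with ξ hξ
    rw [← hN, ← hD, Real.log_div (by simpa using hξ.1) (by simpa using hξ.2)]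
  have hder' := hder.congr_of_eventuallyEq heq
  rw [hder'.fderiv]
  -- norm bound
  have hc1abs : ‖c₁‖ = 1 / R := by
    rw [hc₁, norm_inv, Complex.norm_real, Real.norm_eq_abs, abs_of_pos hR, inv_eq_one_div]
  have hb1' : ‖auxL c₁ (c₁ * ζ + d₁)‖ ≤ 1 / ‖ζ - ω‖ := by
    refine (auxL_norm_le _ _).trans ?_
    rw [hc1abs, hw₁abs]
    have : 1 / R / (‖ζ - ω‖ / R) = 1 / ‖ζ - ω‖ := by
      field_simp
    rw [this]
  have hnum : ‖c₂‖ ≤ 1 / R := by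
    have hcb : ‖(starRingEnd ℂ) b‖ ≤ 1 := by rwa [Complex.norm_conj]
    rw [hc₂, norm_div, Complex.norm_real, Real.norm_eq_abs, abs_of_pos hR, norm_neg]
    exact div_le_div_of_nonneg_right hcb hR.le
  have hb2' : ‖auxL c₂ (c₂ * ζ + d₂)‖ ≤ 1 / ‖ζ - ω‖ := by
    refine (auxL_norm_le _ _).trans ?_
    have h := div_le_div₀ (by positivity : (0:ℝ) ≤ 1 / R) hnum (div_pos habs_pos hR) hkey
    refine h.trans_eq ?_
    field_simp
  have := norm_sub_le (auxL c₁ (c₁ * ζ + d₁)) (auxL c₂ (c₂ * ζ + d₂))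
  calc ‖auxL c₁ (c₁ * ζ + d₁) - auxL c₂ (c₂ * ζ + d₂)‖
      ≤ ‖auxL c₁ (c₁ * ζ + d₁)‖ + ‖auxL c₂ (c₂ * ζ + d₂)‖ := this
    _ ≤ 1 / ‖ζ - ω‖ + 1 / ‖ζ - ω‖ := add_le_add hb1' hb2'
    _ = 2 / ‖ζ - ω‖ := by ring
end

section
/- Let G(ζ,ω) be the Green function of the disk {ζ : |ζ - ζ₀| ≤ R} as above, and write ω = ω₁ + i·ω₂. Then for distinct ζ, ω in the disk and j = 1, 2, |∂_{ω_j} ∇_ζ G(ζ,ω)| ≤ 2/|ζ - ω|². -/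
open Complex

theorem hasFDerivAt_log_abs {h : ℂ → ℂ} {h' z : ℂ} (hd : HasDerivAt h h' z) (hz : h z ≠ 0) :
    HasFDerivAt (fun ξ => Real.log (‖h ξ‖))
      (Complex.reCLM.comp ((h' / h z) • (1 : ℂ →L[ℝ] ℂ))) z := by
  have hns : Complex.normSq (h z) ≠ 0 := by
    simpa [Complex.normSq_eq_norm_sq, pow_eq_zero_iff] using hz
  have hfun : (fun ξ => Real.log (‖h ξ‖))
      = fun ξ => (2:ℝ)⁻¹ * Real.log (Complex.normSq (h ξ)) := by
    funext ξ
    rw [Complex.norm_def, Real.log_sqrt (Complex.normSq_nonneg _)]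
    ring
  rw [hfun]
  set w := h z with hw
  have hN : HasFDerivAt Complex.normSq
      ((w.re • Complex.reCLM + w.re • Complex.reCLM) + (w.im • Complex.imCLM + w.im • Complex.imCLM)) w := by
    have : HasFDerivAt (fun w : ℂ => w.re * w.re + w.im * w.im)
        ((w.re • Complex.reCLM + w.re • Complex.reCLM) + (w.im • Complex.imCLM + w.im • Complex.imCLM)) w :=
      (Complex.reCLM.hasFDerivAt.mul Complex.reCLM.hasFDerivAt).add
        (Complex.imCLM.hasFDerivAt.mul Complex.imCLM.hasFDerivAt)
    have e : (Complex.normSq : ℂ → ℝ) = fun w : ℂ => w.re * w.re + w.im * w.im :=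
      funext Complex.normSq_apply
    rw [e]; exact this
  have hh : HasFDerivAt h ((ContinuousLinearMap.smulRight (1 : ℂ →L[ℂ] ℂ) h').restrictScalars ℝ) z :=
    hd.hasFDerivAt.restrictScalars ℝ
  have hq := hN.comp z hh
  have hlog := (Real.hasDerivAt_log hns).comp_hasFDerivAt z hq
  have hfinal : HasFDerivAt (fun ξ => (2:ℝ)⁻¹ * Real.log (Complex.normSq (h ξ)))
      ((2:ℝ)⁻¹ • ((Complex.normSq w)⁻¹ •
      ((w.re • Complex.reCLM + w.re • Complex.reCLM) + (w.im • Complex.imCLM + w.im • Complex.imCLM)).comp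
        ((ContinuousLinearMap.smulRight (1 : ℂ →L[ℂ] ℂ) h').restrictScalars ℝ))) z := by
    simpa [Function.comp_def, Pi.smul_def, smul_eq_mul] using hlog.const_smul (2:ℝ)⁻¹
  convert hfinal using 1
  ext v
  simp only [ContinuousLinearMap.coe_comp', Function.comp_apply, ContinuousLinearMap.smul_apply,
    ContinuousLinearMap.one_apply, Complex.reCLM_apply,
    ContinuousLinearMap.add_apply, ContinuousLinearMap.coe_smul', Pi.smul_apply,
    Complex.imCLM_apply, ContinuousLinearMap.coe_restrictScalars',
    ContinuousLinearMap.smulRight_apply, ContinuousLinearMap.one_apply, smul_eq_mul]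
  rw [div_mul_eq_mul_div, Complex.div_re]
  rw [Complex.normSq_apply] at hns ⊢
  field_simp [Complex.mul_re, Complex.mul_im]
  ring

private lemma Gsimp (u b c R' : ℂ) (hu : u ≠ 0) (hb : b ≠ 0) (hR : R' ≠ 0) :
    (1 / R' * b - u / R' * -(1 / R' * c)) / b ^ 2 / (u / R' / b) = u⁻¹ + c / (R' * b) := by
  have hb2 : b ^ 2 ≠ 0 := pow_ne_zero _ hb
  rw [div_div, div_eq_iff (mul_ne_zero hb2 (div_ne_zero (div_ne_zero hu hR) hb))]
  field_simp
  ring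

theorem inner_grad_eq (ζ₀ : ℂ) (R : ℝ) (hR : 0 < R) (ζ υ : ℂ) (h1 : ζ ≠ υ)
    (hD : 1 - (ζ - ζ₀) / (R:ℂ) * (starRingEnd ℂ) ((υ - ζ₀) / (R:ℂ)) ≠ 0) :
    ((fderiv ℝ (fun ξ : ℂ =>
          Real.log (‖(ξ - ζ₀) / R - (υ - ζ₀) / R‖ /
            ‖1 - (ξ - ζ₀) / R * (starRingEnd ℂ) ((υ - ζ₀) / R)‖)) ζ 1 : ℝ) : ℂ) +
        ((fderiv ℝ (fun ξ : ℂ =>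
          Real.log (‖(ξ - ζ₀) / R - (υ - ζ₀) / R‖ /
            ‖1 - (ξ - ζ₀) / R * (starRingEnd ℂ) ((υ - ζ₀) / R)‖)) ζ Complex.I : ℝ) : ℂ)
          * Complex.I
    = ((starRingEnd ℂ) (ζ - υ))⁻¹ +
      ((υ - ζ₀) / (R:ℂ)) / ((R:ℂ) * (1 - (starRingEnd ℂ) ((ζ - ζ₀) / (R:ℂ)) * ((υ - ζ₀) / (R:ℂ)))) := by
  have Rne : (R:ℂ) ≠ 0 := by exact_mod_cast hR.ne'
  set c : ℂ := (starRingEnd ℂ) ((υ - ζ₀) / (R:ℂ)) with hc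
  set A : ℂ → ℂ := fun ξ => (ξ - ζ₀) / (R:ℂ) - (υ - ζ₀) / (R:ℂ) with hA
  set B : ℂ → ℂ := fun ξ => 1 - (ξ - ζ₀) / (R:ℂ) * c with hB
  have hAval : A ζ = (ζ - υ) / (R:ℂ) := by simp only [hA]; ring
  have hAζ : A ζ ≠ 0 := by
    rw [hAval]; exact div_ne_zero (sub_ne_zero.2 h1) Rne
  have hBζ : B ζ ≠ 0 := hD
  have hdA : HasDerivAt A (1 / (R:ℂ)) ζ := by
    simpa [hA] using (((hasDerivAt_id ζ).sub_const ζ₀).div_const (R:ℂ)).sub_const ((υ - ζ₀) / (R:ℂ))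
  have hdB : HasDerivAt B (-(1 / (R:ℂ) * c)) ζ := by
    simpa using ((((hasDerivAt_id ζ).sub_const ζ₀).div_const (R:ℂ)).mul_const c).const_sub 1
  have hdh : HasDerivAt (fun ξ => A ξ / B ξ)
      ((1 / (R:ℂ) * B ζ - A ζ * (-(1 / (R:ℂ) * c))) / (B ζ)^2) ζ := hdA.div hdB hBζ
  have hne0 : A ζ / B ζ ≠ 0 := div_ne_zero hAζ hBζ
  have hlog := hasFDerivAt_log_abs hdh hne0
  set G : ℂ := ((1 / (R:ℂ) * B ζ - A ζ * (-(1 / (R:ℂ) * c))) / (B ζ)^2) / (A ζ / B ζ) with hG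
  have hfun : (fun ξ : ℂ =>
          Real.log (‖(ξ - ζ₀) / R - (υ - ζ₀) / R‖ /
            ‖1 - (ξ - ζ₀) / R * (starRingEnd ℂ) ((υ - ζ₀) / R)‖))
      = fun ξ => Real.log (‖A ξ / B ξ‖) := by
    funext ξ
    rw [← norm_div]
  rw [hfun, hlog.fderiv]
  simp only [ContinuousLinearMap.coe_comp', Function.comp_apply, ContinuousLinearMap.smul_apply,
    ContinuousLinearMap.one_apply, Complex.reCLM_apply, smul_eq_mul]
  have hGval : G = (ζ - υ)⁻¹ + c / ((R:ℂ) * B ζ) := by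
    rw [hG, hAval]
    exact Gsimp (ζ - υ) (B ζ) c (R:ℂ) (sub_ne_zero.2 h1) hBζ Rne
  have key : ∀ g : ℂ, ((g * 1).re : ℂ) + ((g * Complex.I).re : ℂ) * Complex.I = (starRingEnd ℂ) g := by
    intro g
    apply Complex.ext <;> simp
  rw [key, hGval]
  simp only [map_add, map_inv₀, map_div₀, map_mul, map_sub, map_one, Complex.conj_conj,
    Complex.conj_ofReal, hB, hc]

private lemma abs_sub_le_one_sub_conj_mul {u v : ℂ} (hu : ‖u‖ ≤ 1)
    (hv : ‖v‖ ≤ 1) : ‖u - v‖ ≤ ‖1 - (starRingEnd ℂ) u * v‖ := by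
  have key : Complex.normSq (1 - (starRingEnd ℂ) u * v) - Complex.normSq (u - v)
      = (1 - Complex.normSq u) * (1 - Complex.normSq v) := by
    simp only [Complex.normSq_apply, Complex.sub_re, Complex.sub_im, Complex.mul_re,
      Complex.mul_im, Complex.one_re, Complex.one_im, Complex.conj_re, Complex.conj_im]
    ring
  have hu' : Complex.normSq u ≤ 1 := by
    rw [← Complex.sq_norm]; nlinarith [norm_nonneg u]
  have hv' : Complex.normSq v ≤ 1 := by
    rw [← Complex.sq_norm]; nlinarith [norm_nonneg v]
  have h : Complex.normSq (u - v) ≤ Complex.normSq (1 - (starRingEnd ℂ) u * v) := by nlinarith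
  have := Real.sqrt_le_sqrt h
  simpa [Complex.norm_def] using this

private lemma one_sub_mul_conj_ne_zero {u v : ℂ} (hu : ‖u‖ ≤ 1)
    (hv : ‖v‖ ≤ 1) (huv : u ≠ v) : 1 - u * (starRingEnd ℂ) v ≠ 0 := by
  intro h
  have h1 : u * (starRingEnd ℂ) v = 1 := by linear_combination -h
  have habs : ‖u‖ * ‖v‖ = 1 := by
    have := congrArg (‖·‖) h1
    simpa [map_mul] using this
  have hu1 : ‖u‖ = 1 := by nlinarith [norm_nonneg u, norm_nonneg v]
  have hv1 : ‖v‖ = 1 := by nlinarith [norm_nonneg u, norm_nonneg v]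
  have hvne : (starRingEnd ℂ) v ≠ 0 := by
    simp only [ne_eq, map_eq_zero]
    intro h; rw [h] at hv1; simp at hv1
  have hueq : u = ((starRingEnd ℂ) v)⁻¹ := by
    field_simp at h1 ⊢
    linear_combination h1
  have : u = v := by
    rw [hueq, Complex.inv_def, Complex.conj_conj, Complex.normSq_conj,
      ← Complex.sq_norm, hv1]
    simp
  exact huv this

noncomputable def conjCLM : ℂ →L[ℝ] ℂ := Complex.conjCLE.toContinuousLinearMap

@[simp] lemma conjCLM_apply (z : ℂ) : conjCLM z = (starRingEnd ℂ) z := rfl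

private lemma hF1 (ζ ω : ℂ) (hne : ζ ≠ ω) :
    HasFDerivAt (fun υ : ℂ => ((starRingEnd ℂ) (ζ - υ))⁻¹)
      ((((starRingEnd ℂ) (ζ - ω))^2)⁻¹ • conjCLM) ω := by
  have hc : (starRingEnd ℂ) (ζ - ω) ≠ 0 := by
    simp only [ne_eq, map_eq_zero]
    exact sub_ne_zero.2 hne
  have hm : HasFDerivAt (fun υ : ℂ => (starRingEnd ℂ) (ζ - υ)) (-conjCLM) ω := by
    have h0 : HasFDerivAt (fun υ : ℂ => ζ - υ) (-(ContinuousLinearMap.id ℝ ℂ)) ω := by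
      exact (hasFDerivAt_id (𝕜 := ℝ) ω).const_sub ζ
    have h1 : HasFDerivAt (fun z : ℂ => conjCLM z) conjCLM (ζ - ω) := conjCLM.hasFDerivAt
    have := h1.comp ω h0
    exact this.congr_fderiv (by ext v; simp)
  have hinv := ((hasDerivAt_inv hc).hasFDerivAt.restrictScalars ℝ).comp ω hm
  refine hinv.congr_fderiv ?_
  ext v
  simp [pow_two]
  ring

private lemma hF2 (ζ₀ : ℂ) (R : ℝ) (hR : 0 < R) (a ω : ℂ)
    (hDv : (R:ℂ) * (1 - a * ((ω - ζ₀) / (R:ℂ))) ≠ 0) :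
    HasFDerivAt (fun υ : ℂ => ((υ - ζ₀) / (R:ℂ)) / ((R:ℂ) * (1 - a * ((υ - ζ₀) / (R:ℂ)))))
      (((((R:ℂ) * (1 - a * ((ω - ζ₀) / (R:ℂ))))^2)⁻¹) • (1 : ℂ →L[ℝ] ℂ)) ω := by
  have Rne : (R:ℂ) ≠ 0 := by exact_mod_cast hR.ne'
  have hN : HasDerivAt (fun υ : ℂ => (υ - ζ₀) / (R:ℂ)) (1 / (R:ℂ)) ω := by
    simpa using ((hasDerivAt_id ω).sub_const ζ₀).div_const (R:ℂ)
  have hDen : HasDerivAt (fun υ : ℂ => (R:ℂ) * (1 - a * ((υ - ζ₀) / (R:ℂ))))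
      ((R:ℂ) * -(a * (1 / (R:ℂ)))) ω := by
    exact ((hN.const_mul a).const_sub 1).const_mul (R:ℂ)
  have hq := hN.div hDen hDv
  have hval : (1 / (R:ℂ) * ((R:ℂ) * (1 - a * ((ω - ζ₀) / (R:ℂ)))) -
      (ω - ζ₀) / (R:ℂ) * ((R:ℂ) * -(a * (1 / (R:ℂ))))) / ((R:ℂ) * (1 - a * ((ω - ζ₀) / (R:ℂ))))^2
      = ((((R:ℂ) * (1 - a * ((ω - ζ₀) / (R:ℂ))))^2)⁻¹) := by
    rw [inv_eq_one_div]
    rw [div_eq_div_iff (pow_ne_zero 2 hDv) (pow_ne_zero 2 hDv)]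
    field_simp
    ring
  rw [hval] at hq
  have := hq.hasFDerivAt.restrictScalars ℝ
  refine this.congr_fderiv ?_
  ext v
  simp [mul_comm]

/-- For the Green function `G(ζ,ω)` of the disk `{ζ : |ζ-ζ₀| ≤ R}`, the real partial
derivatives in `ω = ω₁ + i ω₂` of the gradient `∇_ζ G(ζ,ω)` (identified with a complex
number) satisfy `|∂_{ω_j} ∇_ζ G(ζ,ω)| ≤ 2/|ζ-ω|²` for `j = 1, 2`. -/
theorem deriv_grad_green_disk_bound (ζ₀ : ℂ) (R : ℝ) (hR : 0 < R) (ζ ω : ℂ)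
    (hζ : ‖ζ - ζ₀‖ ≤ R) (hω : ‖ω - ζ₀‖ ≤ R) (hne : ζ ≠ ω) :
    ‖fderiv ℝ (fun υ : ℂ =>
        ((fderiv ℝ (fun ξ : ℂ =>
          Real.log (‖(ξ - ζ₀) / R - (υ - ζ₀) / R‖ /
            ‖1 - (ξ - ζ₀) / R * (starRingEnd ℂ) ((υ - ζ₀) / R)‖)) ζ 1 : ℝ) : ℂ) +
        ((fderiv ℝ (fun ξ : ℂ =>
          Real.log (‖(ξ - ζ₀) / R - (υ - ζ₀) / R‖ /
            ‖1 - (ξ - ζ₀) / R * (starRingEnd ℂ) ((υ - ζ₀) / R)‖)) ζ Complex.I : ℝ) : ℂ)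
          * Complex.I) ω 1‖ ≤ 2 / ‖ζ - ω‖ ^ 2 ∧
    ‖fderiv ℝ (fun υ : ℂ =>
        ((fderiv ℝ (fun ξ : ℂ =>
          Real.log (‖(ξ - ζ₀) / R - (υ - ζ₀) / R‖ /
            ‖1 - (ξ - ζ₀) / R * (starRingEnd ℂ) ((υ - ζ₀) / R)‖)) ζ 1 : ℝ) : ℂ) +
        ((fderiv ℝ (fun ξ : ℂ =>
          Real.log (‖(ξ - ζ₀) / R - (υ - ζ₀) / R‖ /
            ‖1 - (ξ - ζ₀) / R * (starRingEnd ℂ) ((υ - ζ₀) / R)‖)) ζ Complex.I : ℝ) : ℂ)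
          * Complex.I) ω Complex.I‖ ≤ 2 / ‖ζ - ω‖ ^ 2 := by
  have Rne : (R:ℂ) ≠ 0 := by exact_mod_cast hR.ne'
  have hζωne : ζ - ω ≠ 0 := sub_ne_zero.2 hne
  have habs0 : 0 < ‖ζ - ω‖ := norm_pos_iff.mpr hζωne
  have hu : ‖(ζ - ζ₀) / (R:ℂ)‖ ≤ 1 := by
    rw [norm_div, Complex.norm_real, Real.norm_of_nonneg hR.le]
    exact div_le_one_of_le₀ hζ hR.le
  have hv : ‖(ω - ζ₀) / (R:ℂ)‖ ≤ 1 := by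
    rw [norm_div, Complex.norm_real, Real.norm_of_nonneg hR.le]
    exact div_le_one_of_le₀ hω hR.le
  have hφne : (ζ - ζ₀) / (R:ℂ) ≠ (ω - ζ₀) / (R:ℂ) := by
    intro h
    apply hne
    field_simp at h
    exact sub_left_inj.mp h
  have hDω : 1 - (ζ - ζ₀) / (R:ℂ) * (starRingEnd ℂ) ((ω - ζ₀) / (R:ℂ)) ≠ 0 :=
    one_sub_mul_conj_ne_zero hu hv hφne
  -- the set where the inner gradient has the closed form
  have hSopen : IsOpen {υ : ℂ | υ ≠ ζ ∧
      1 - (ζ - ζ₀) / (R:ℂ) * (starRingEnd ℂ) ((υ - ζ₀) / (R:ℂ)) ≠ 0} := by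
    apply IsOpen.inter
    · exact isOpen_ne
    · have hcont : Continuous fun υ : ℂ =>
          1 - (ζ - ζ₀) / (R:ℂ) * (starRingEnd ℂ) ((υ - ζ₀) / (R:ℂ)) := by
        simp only [starRingEnd_apply]
        fun_prop
      exact isOpen_compl_singleton.preimage hcont
  have hωS : ω ∈ {υ : ℂ | υ ≠ ζ ∧
      1 - (ζ - ζ₀) / (R:ℂ) * (starRingEnd ℂ) ((υ - ζ₀) / (R:ℂ)) ≠ 0} := ⟨hne.symm, hDω⟩
  set a : ℂ := (starRingEnd ℂ) ((ζ - ζ₀) / (R:ℂ)) with ha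
  have E : (fun υ : ℂ =>
        ((fderiv ℝ (fun ξ : ℂ =>
          Real.log (‖(ξ - ζ₀) / R - (υ - ζ₀) / R‖ /
            ‖1 - (ξ - ζ₀) / R * (starRingEnd ℂ) ((υ - ζ₀) / R)‖)) ζ 1 : ℝ) : ℂ) +
        ((fderiv ℝ (fun ξ : ℂ =>
          Real.log (‖(ξ - ζ₀) / R - (υ - ζ₀) / R‖ /
            ‖1 - (ξ - ζ₀) / R * (starRingEnd ℂ) ((υ - ζ₀) / R)‖)) ζ Complex.I : ℝ) : ℂ)
          * Complex.I)
      =ᶠ[nhds ω] (fun υ : ℂ => ((starRingEnd ℂ) (ζ - υ))⁻¹ +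
        ((υ - ζ₀) / (R:ℂ)) / ((R:ℂ) * (1 - a * ((υ - ζ₀) / (R:ℂ))))) := by
    filter_upwards [hSopen.mem_nhds hωS] with υ hυ
    exact inner_grad_eq ζ₀ R hR ζ υ hυ.1.symm hυ.2
  have hDv : (R:ℂ) * (1 - a * ((ω - ζ₀) / (R:ℂ))) ≠ 0 := by
    apply mul_ne_zero Rne
    have : 1 - a * ((ω - ζ₀) / (R:ℂ))
        = (starRingEnd ℂ) (1 - (ζ - ζ₀) / (R:ℂ) * (starRingEnd ℂ) ((ω - ζ₀) / (R:ℂ))) := by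
      simp [ha, map_sub, map_mul]
    rw [this, starRingEnd_apply]
    exact star_ne_zero.mpr hDω
  have hF := (hF1 ζ ω hne).fun_add (hF2 ζ₀ R hR a ω hDv)
  have hfd := E.fderiv_eq (𝕜 := ℝ)
  rw [hfd, hF.fderiv]
  -- the bound
  have habsle : ‖ζ - ω‖ ≤ ‖(R:ℂ) * (1 - a * ((ω - ζ₀) / (R:ℂ)))‖ := by
    have h1 : ζ - ω = (R:ℂ) * ((ζ - ζ₀) / (R:ℂ) - (ω - ζ₀) / (R:ℂ)) := by
      field_simp
      ring
    rw [h1, norm_mul, norm_mul]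
    exact mul_le_mul_of_nonneg_left (abs_sub_le_one_sub_conj_mul hu hv) (norm_nonneg _)
  have hbound : ∀ v : ℂ, ‖v‖ = 1 →
      ‖((((starRingEnd ℂ) (ζ - ω))^2)⁻¹ • conjCLM +
        ((((R:ℂ) * (1 - a * ((ω - ζ₀) / (R:ℂ))))^2)⁻¹) • (1 : ℂ →L[ℝ] ℂ)) v‖
      ≤ 2 / ‖ζ - ω‖ ^ 2 := by
    intro v hv1
    simp only [ContinuousLinearMap.add_apply, ContinuousLinearMap.smul_apply, conjCLM_apply,
      ContinuousLinearMap.one_apply, smul_eq_mul]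
    refine le_trans (norm_add_le _ _) ?_
    rw [norm_mul, norm_mul, norm_inv, norm_inv, norm_pow, norm_pow, Complex.norm_conj,
      Complex.norm_conj, hv1, mul_one, mul_one]
    have h2 : (‖(R:ℂ) * (1 - a * ((ω - ζ₀) / (R:ℂ)))‖ ^ 2)⁻¹
        ≤ (‖ζ - ω‖ ^ 2)⁻¹ := by
      apply inv_anti₀ (by positivity)
      exact pow_le_pow_left₀ habs0.le habsle 2
    have h4 : (2:ℝ) / ‖ζ - ω‖ ^ 2
        = (‖ζ - ω‖ ^ 2)⁻¹ + (‖ζ - ω‖ ^ 2)⁻¹ := by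
      rw [div_eq_mul_inv]; ring
    rw [h4]
    exact add_le_add le_rfl h2
  exact ⟨hbound 1 (by simp), hbound Complex.I (by simp)⟩
end

section
/- Let Y be a continuous function on the closed disk {z : |z - z₀| ≤ ρ} with values in the unit disk, and let Z be any complex number. Let h be the Poisson integral in the disk {|z - z₀| < ρ} of the boundary values of Y on the circle |z - z₀| = ρ. Then |∇h(z₀)| ≤ (2/ρ²) ∫_{|y - z₀| = ρ} |Y(y) - Z| dH¹(y), where dH¹ is the normalized (probability) arc-length measure on that circle. -/
open Complex Metric intervalIntegral

lemma exp_sub_ne {w : ℂ} (hw : ‖w‖ < 1) (θ : ℝ) :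
    Complex.exp (θ * Complex.I) - w ≠ 0 := by
  rw [sub_ne_zero]
  intro hwe
  rw [← hwe, Complex.norm_exp_ofReal_mul_I] at hw
  exact lt_irrefl 1 hw

lemma cont_inv {w : ℂ} (hw : ‖w‖ < 1) :
    Continuous fun θ : ℝ => (Complex.exp (θ * Complex.I) - w)⁻¹ := by
  apply Continuous.inv₀
  · exact (Complex.continuous_exp.comp (by continuity)).sub continuous_const
  · exact fun θ => exp_sub_ne hw θ

lemma int_inv {w : ℂ} (hw : ‖w‖ < 1) (hw0 : w ≠ 0) :
    ∫ θ in (0:ℝ)..(2*Real.pi), (Complex.exp (θ * Complex.I) - w)⁻¹ = 0 := by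
  have hball : w ∈ Metric.ball (0:ℂ) 1 := by simpa using hw
  have h1 := circleIntegral.integral_sub_inv_of_mem_ball hball
  rw [circleIntegral] at h1
  simp only [deriv_circleMap, circleMap, Complex.ofReal_one, zero_add, one_mul,
    smul_eq_mul] at h1
  have h2 : ∀ θ:ℝ, Complex.exp (θ*Complex.I)*Complex.I * (Complex.exp (θ*Complex.I) - w)⁻¹
      = Complex.I + (Complex.I * w) * (Complex.exp (θ*Complex.I) - w)⁻¹ := by
    intro θ
    field_simp [exp_sub_ne hw θ]
    ring
  rw [intervalIntegral.integral_congr (fun θ _ => h2 θ)] at h1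
  rw [intervalIntegral.integral_add (g := fun θ : ℝ => Complex.I * w * (Complex.exp (θ*Complex.I) - w)⁻¹) intervalIntegrable_const
    ((continuous_const.mul (cont_inv hw)).intervalIntegrable _ _)] at h1
  rw [intervalIntegral.integral_const, intervalIntegral.integral_const_mul] at h1
  have h3 : (Complex.I * w) * (∫ θ in (0:ℝ)..(2*Real.pi), (Complex.exp (θ*Complex.I) - w)⁻¹) = 0 := by
    have hs : ((2*Real.pi - 0 : ℝ) • Complex.I : ℂ) = 2 * Real.pi * Complex.I := by
      push_cast [Complex.real_smul]
      ring
    rw [hs] at h1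
    linear_combination h1
  rcases mul_eq_zero.1 h3 with h4 | h4
  · exact absurd h4 (mul_ne_zero Complex.I_ne_zero hw0)
  · exact h4

lemma poisson_eq {w : ℂ} (hw : ‖w‖ < 1) (θ : ℝ) :
    ((1 - ‖w‖ ^ 2) / ‖w - Complex.exp (θ*Complex.I)‖ ^ 2 : ℝ)
      = 1 + 2 * (w * (Complex.exp (θ*Complex.I) - w)⁻¹).re := by
  set e := Complex.exp (θ*Complex.I) with he
  have habs : ‖e‖ = 1 := Complex.norm_exp_ofReal_mul_I θ
  have hne : e - w ≠ 0 := exp_sub_ne hw θ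
  have hD : Complex.normSq (w - e) ≠ 0 := by
    intro h0
    apply hne
    have h0' : w - e = 0 := Complex.normSq_eq_zero.1 h0
    rw [← neg_sub] at h0'
    simpa using neg_eq_zero.1 h0'
  have h1 : e.re^2 + e.im^2 = 1 := by
    have h2 := Complex.sq_norm e
    rw [habs, Complex.normSq_apply] at h2
    nlinarith [h2]
  rw [Complex.sq_norm, Complex.sq_norm]
  rw [mul_comm w, ← div_eq_inv_mul, Complex.div_re]
  rw [Complex.normSq_apply, Complex.normSq_apply, Complex.normSq_apply] at *
  simp only [Complex.sub_re, Complex.sub_im] at hD ⊢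
  have hD' : (e.re - w.re) * (e.re - w.re) + (e.im - w.im) * (e.im - w.im) ≠ 0 := by
    rw [show (e.re - w.re) * (e.re - w.re) + (e.im - w.im) * (e.im - w.im)
      = (w.re - e.re) * (w.re - e.re) + (w.im - e.im) * (w.im - e.im) from by ring]
    exact hD
  rw [show (e.re - w.re) * (e.re - w.re) + (e.im - w.im) * (e.im - w.im)
      = (w.re - e.re) * (w.re - e.re) + (w.im - e.im) * (w.im - e.im) from by ring]
  rw [← add_div, ← mul_div_assoc, one_add_div hD, div_left_inj' hD]
  linear_combination -h1

lemma poisson_diff {w : ℂ} (hw : ‖w‖ < 1) (hw0 : w ≠ 0) (F : ℝ → ℂ)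
    (hF : Continuous F) (Z : ℂ) :
    ‖(∫ θ in (0:ℝ)..(2*Real.pi),
        ((1 - ‖w‖ ^ 2) / ‖w - Complex.exp (θ * Complex.I)‖ ^ 2) • F θ)
      - ∫ θ in (0:ℝ)..(2*Real.pi), F θ‖
      ≤ (2 * ‖w‖ / (1 - ‖w‖))
        * ∫ θ in (0:ℝ)..(2*Real.pi), ‖F θ - Z‖ := by
  set t := ‖w‖ with ht
  have h1t : 0 < 1 - t := by linarith
  have ht0 : 0 < t := norm_pos_iff.2 hw0
  set g : ℝ → ℝ := fun θ => 2 * (w * (Complex.exp (θ * Complex.I) - w)⁻¹).re with hg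
  have contg : Continuous g :=
    continuous_const.mul (Complex.continuous_re.comp (continuous_const.mul (cont_inv hw)))
  have hintF : IntervalIntegrable F MeasureTheory.volume 0 (2*Real.pi) :=
    hF.intervalIntegrable _ _
  have hintgF : IntervalIntegrable (fun θ => g θ • F θ) MeasureTheory.volume 0 (2*Real.pi) :=
    (contg.smul hF).intervalIntegrable _ _
  have hintFZ : IntervalIntegrable (fun θ => ‖F θ - Z‖)
      MeasureTheory.volume 0 (2*Real.pi) :=
    (continuous_norm.comp (hF.sub continuous_const)).intervalIntegrable _ _
  have hwint : IntervalIntegrable (fun θ => w * (Complex.exp (θ * Complex.I) - w)⁻¹)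
      MeasureTheory.volume 0 (2*Real.pi) :=
    (continuous_const.mul (cont_inv hw)).intervalIntegrable _ _
  have hg0 : (∫ θ in (0:ℝ)..(2*Real.pi), g θ) = 0 := by
    have h2 := Complex.reCLM.intervalIntegral_comp_comm hwint
    simp only [Complex.reCLM_apply] at h2
    calc (∫ θ in (0:ℝ)..(2*Real.pi), g θ)
        = 2 * ∫ θ in (0:ℝ)..(2*Real.pi), (w * (Complex.exp (θ * Complex.I) - w)⁻¹).re := by
          simp only [hg]
          rw [intervalIntegral.integral_const_mul]
      _ = 2 * (∫ θ in (0:ℝ)..(2*Real.pi), w * (Complex.exp (θ * Complex.I) - w)⁻¹).re := by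
          rw [h2]
      _ = 0 := by
          rw [intervalIntegral.integral_const_mul, int_inv hw hw0, mul_zero,
            Complex.zero_re, mul_zero]
  have hkey : (∫ θ in (0:ℝ)..(2*Real.pi),
        ((1 - ‖w‖ ^ 2) / ‖w - Complex.exp (θ * Complex.I)‖ ^ 2) • F θ)
      - (∫ θ in (0:ℝ)..(2*Real.pi), F θ)
      = ∫ θ in (0:ℝ)..(2*Real.pi), g θ • (F θ - Z) := by
    have e1 : ∀ θ ∈ Set.uIcc (0:ℝ) (2*Real.pi),
        ((1 - ‖w‖ ^ 2) / ‖w - Complex.exp (θ * Complex.I)‖ ^ 2) • F θ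
        = F θ + g θ • F θ := by
      intro θ _
      rw [poisson_eq hw θ, add_smul, one_smul]
    rw [intervalIntegral.integral_congr e1,
      intervalIntegral.integral_add hintF hintgF, add_sub_cancel_left]
    have e2 : ∀ θ ∈ Set.uIcc (0:ℝ) (2*Real.pi),
        g θ • (F θ - Z) = g θ • F θ - g θ • Z := fun θ _ => smul_sub _ _ _
    rw [intervalIntegral.integral_congr e2,
      intervalIntegral.integral_sub (g := fun θ => g θ • Z) hintgF
        ((contg.smul continuous_const).intervalIntegrable _ _),
      intervalIntegral.integral_smul_const, hg0, zero_smul, sub_zero]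
  rw [hkey]
  have hbd : ∀ θ : ℝ, ‖g θ • (F θ - Z)‖ ≤ (2 * t / (1 - t)) * ‖F θ - Z‖ := by
    intro θ
    have hd : 1 - t ≤ ‖Complex.exp (θ * Complex.I) - w‖ := by
      have h5 : ‖Complex.exp (θ * Complex.I)‖ - ‖w‖
          ≤ ‖Complex.exp (θ * Complex.I) - w‖ := by
        simpa using
          norm_sub_norm_le (Complex.exp (θ * Complex.I)) w
      rwa [Complex.norm_exp_ofReal_mul_I, ← ht] at h5
    have h6 : |g θ| ≤ 2 * t / (1 - t) := by
      simp only [hg, abs_mul, Nat.abs_ofNat]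
      rw [mul_div_assoc]
      have h7 : |(w * (Complex.exp (θ * Complex.I) - w)⁻¹).re| ≤ t / (1 - t) := by
        refine le_trans (Complex.abs_re_le_norm _) ?_
        rw [norm_mul, norm_inv, ← ht, div_eq_mul_inv]
        exact mul_le_mul_of_nonneg_left (inv_anti₀ h1t hd) ht0.le
      linarith
    rw [norm_smul, Real.norm_eq_abs]
    exact mul_le_mul_of_nonneg_right h6 (norm_nonneg _)
  calc ‖∫ θ in (0:ℝ)..(2*Real.pi), g θ • (F θ - Z)‖
      ≤ |∫ θ in (0:ℝ)..(2*Real.pi), (2 * t / (1 - t)) * ‖F θ - Z‖| := by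
        apply intervalIntegral.norm_integral_le_abs_of_norm_le
        · exact MeasureTheory.ae_of_all _ fun θ => hbd θ
        · exact (hintFZ.const_mul _)
    _ = (2 * t / (1 - t)) * ∫ θ in (0:ℝ)..(2*Real.pi), ‖F θ - Z‖ := by
        rw [intervalIntegral.integral_const_mul]
        exact abs_of_nonneg (mul_nonneg (by positivity)
          (intervalIntegral.integral_nonneg (by positivity) fun u _ => norm_nonneg _))

/-- Let `Y` be continuous on the closed disk `{z : |z-z₀| ≤ ρ}` (contained in the unit
disk) with values in the unit disk, `Z ∈ ℂ`, and let `h` be the Poisson integral of the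
boundary values of `Y` on the circle `|z-z₀| = ρ`. Then
`|∇h(z₀)| ≤ (2/ρ²) ∫_{|y-z₀|=ρ} |Y(y) - Z| dH¹(y)`, where `dH¹` is the normalized
(probability) arc-length measure on that circle. -/
theorem grad_poisson_integral_center (z₀ : ℂ) (ρ : ℝ) (hρ : 0 < ρ)
    (hsub : Metric.closedBall z₀ ρ ⊆ Metric.ball (0 : ℂ) 1)
    (Y : ℂ → ℂ) (hY : ContinuousOn Y (Metric.closedBall z₀ ρ))
    (hYmaps : ∀ z ∈ Metric.closedBall z₀ ρ, ‖Y z‖ < 1)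
    (Z : ℂ) (h : ℂ → ℂ)
    (hh : ∀ z ∈ Metric.ball z₀ ρ, h z =
      (1 / (2 * Real.pi)) • ∫ θ in (0 : ℝ)..(2 * Real.pi),
        ((1 - ‖(z - z₀) / ρ‖ ^ 2) /
          ‖(z - z₀) / ρ - Complex.exp (θ * Complex.I)‖ ^ 2) •
            Y (z₀ + ρ * Complex.exp (θ * Complex.I))) :
    ‖fderiv ℝ h z₀‖ ≤ (2 / ρ ^ 2) * ((1 / (2 * Real.pi)) *
        ∫ θ in (0 : ℝ)..(2 * Real.pi),
          ‖Y (z₀ + ρ * Complex.exp (θ * Complex.I)) - Z‖) := by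
  have hπ : (0:ℝ) < Real.pi := Real.pi_pos
  -- ρ < 1
  have hρ1 : ρ < 1 := by
    have ha : (z₀ + ρ) ∈ Metric.ball (0:ℂ) 1 := hsub (by
      simp [Metric.mem_closedBall, Complex.dist_eq, add_sub_cancel_left,
        Complex.norm_real, Real.norm_eq_abs, abs_of_pos hρ])
    have hb : (z₀ - ρ) ∈ Metric.ball (0:ℂ) 1 := hsub (by
      simp [Metric.mem_closedBall, Complex.dist_eq, sub_sub_cancel_left,
        Complex.norm_real, Real.norm_eq_abs, abs_of_pos hρ])
    rw [Metric.mem_ball, Complex.dist_eq, sub_zero] at ha hb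
    have h2 : ‖(z₀ + ρ) - (z₀ - ρ)‖
        ≤ ‖z₀ + ρ‖ + ‖z₀ - ρ‖ := by
      simpa using norm_sub_le (z₀ + (ρ:ℂ)) (z₀ - (ρ:ℂ))
    have h3 : ((z₀ + ρ) - (z₀ - ρ) : ℂ) = ((2*ρ:ℝ):ℂ) := by push_cast; ring
    rw [h3, Complex.norm_real, Real.norm_eq_abs, abs_of_pos (by linarith)] at h2
    linarith
  -- continuity of the boundary function
  have contY' : Continuous fun θ : ℝ => Y (z₀ + ρ * Complex.exp (θ * Complex.I)) := by
    apply hY.comp_continuous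
    · continuity
    · intro θ
      simp [Metric.mem_closedBall, Complex.dist_eq, add_sub_cancel_left, map_mul,
        Complex.norm_real, Real.norm_eq_abs, Complex.norm_exp_ofReal_mul_I, abs_of_pos hρ]
  have hI0 : 0 ≤ ∫ θ in (0:ℝ)..(2*Real.pi),
      ‖Y (z₀ + ρ * Complex.exp (θ * Complex.I)) - Z‖ :=
    intervalIntegral.integral_nonneg (by positivity) fun u _ => norm_nonneg _
  apply norm_fderiv_le_of_lip' ℝ
  · have : (0:ℝ) < 2 * Real.pi := by positivity
    positivity
  have hr : 0 < ρ * (1 - ρ) / 2 := by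
    have h1 : 0 < 1 - ρ := by linarith
    positivity
  filter_upwards [Metric.ball_mem_nhds z₀ hr] with z hz
  rcases eq_or_ne z z₀ with rfl | hzz
  · simp
  have hdist : ‖z - z₀‖ < ρ * (1 - ρ) / 2 := by
    rw [Metric.mem_ball, Complex.dist_eq] at hz; exact hz
  have hzball : z ∈ Metric.ball z₀ ρ := by
    rw [Metric.mem_ball, Complex.dist_eq]
    nlinarith
  set w : ℂ := (z - z₀) / (ρ:ℂ) with hwdef
  have habsw : ‖w‖ = ‖z - z₀‖ / ρ := by
    rw [hwdef, norm_div, Complex.norm_real, Real.norm_eq_abs, abs_of_pos hρ]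
  have ht2 : ‖w‖ ≤ (1 - ρ) / 2 := by
    rw [habsw, div_le_iff₀ hρ]
    nlinarith
  have hw1 : ‖w‖ < 1 := lt_of_le_of_lt ht2 (by linarith)
  have hw0 : w ≠ 0 := div_ne_zero (sub_ne_zero.2 hzz) (by
    simpa using hρ.ne')
  -- value at the center
  have hz₀val : h z₀ = (1 / (2 * Real.pi)) •
      ∫ θ in (0:ℝ)..(2*Real.pi), Y (z₀ + ρ * Complex.exp (θ * Complex.I)) := by
    rw [hh z₀ (Metric.mem_ball_self hρ)]
    congr 1
    apply intervalIntegral.integral_congr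
    intro θ _
    simp [Complex.norm_exp_ofReal_mul_I]
  have hdiff := poisson_diff hw1 hw0
    (fun θ : ℝ => Y (z₀ + ρ * Complex.exp (θ * Complex.I))) contY' Z
  have hnorm : ‖h z - h z₀‖ ≤ (1 / (2 * Real.pi)) *
      ((2 * ‖w‖ / (1 - ‖w‖)) *
        ∫ θ in (0:ℝ)..(2*Real.pi),
          ‖Y (z₀ + ρ * Complex.exp (θ * Complex.I)) - Z‖) := by
    rw [hh z hzball, hz₀val, ← smul_sub, norm_smul, Real.norm_eq_abs,
      abs_of_pos (by positivity)]
    exact mul_le_mul_of_nonneg_left hdiff (by positivity)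
  refine hnorm.trans ?_
  -- final arithmetic
  set t := ‖w‖ with htdef
  have ht0 : 0 < t := norm_pos_iff.2 hw0
  have h1t : 0 < 1 - t := by linarith
  have hρt : ρ ≤ 1 - t := by linarith
  have hs : ‖z - z₀‖ = t * ρ := by
    rw [habsw]; field_simp
  have e3 : 2 * t / (1 - t) ≤ 2 / ρ ^ 2 * ‖z - z₀‖ := by
    rw [div_le_iff₀ h1t, hs]
    have h8 : 2 / ρ ^ 2 * (t * ρ) = 2 * t / ρ := by field_simp
    rw [h8]
    rw [div_mul_eq_mul_div, le_div_iff₀ hρ]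
    nlinarith
  have hnz : ‖z - z₀‖ = ‖z - z₀‖ := rfl
  calc (1 / (2 * Real.pi)) * ((2 * t / (1 - t)) *
        ∫ θ in (0:ℝ)..(2*Real.pi),
          ‖Y (z₀ + ρ * Complex.exp (θ * Complex.I)) - Z‖)
      ≤ (1 / (2 * Real.pi)) * ((2 / ρ ^ 2 * ‖z - z₀‖) *
        ∫ θ in (0:ℝ)..(2*Real.pi),
          ‖Y (z₀ + ρ * Complex.exp (θ * Complex.I)) - Z‖) := by
        apply mul_le_mul_of_nonneg_left _ (by positivity)
        exact mul_le_mul_of_nonneg_right e3 hI0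
    _ = 2 / ρ ^ 2 * ((1 / (2 * Real.pi)) *
        ∫ θ in (0:ℝ)..(2*Real.pi),
          ‖Y (z₀ + ρ * Complex.exp (θ * Complex.I)) - Z‖) * ‖z - z₀‖ := by
        rw [hnz]; ring
end

section
/- Every K-quasiregular mapping w = ρ·S : D → Ω between planar domains, where ρ = |w| and S = w/|w| (so |S| = 1), satisfies ρ·|∇S| ≤ K·|∇ρ| and |∇ρ| ≤ K·ρ·|∇S| almost everywhere in D (at points where w ≠ 0 and w is differentiable). -/
open Complex ContinuousLinearMap

noncomputable def QR.mulRe (a : ℂ) : ℂ →L[ℝ] ℝ :=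
  Complex.reCLM.comp (((ContinuousLinearMap.mul ℂ ℂ) a).restrictScalars ℝ)

lemma QR.mulRe_apply (a v : ℂ) : QR.mulRe a v = (a * v).re := rfl

lemma QR.norm_mulRe (a : ℂ) : ‖QR.mulRe a‖ = ‖a‖ := by
  apply le_antisymm
  · apply ContinuousLinearMap.opNorm_le_bound _ (norm_nonneg a)
    intro v
    rw [QR.mulRe_apply]
    calc |(a * v).re| ≤ ‖a * v‖ := Complex.abs_re_le_norm _
      _ = ‖a‖ * ‖v‖ := by rw [norm_mul]
  · rcases eq_or_ne a 0 with h | h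
    · simp [h]
    · have hle := (QR.mulRe a).le_opNorm ((starRingEnd ℂ) a)
      rw [QR.mulRe_apply, Complex.mul_conj] at hle
      have h1 : ‖a‖ ≠ 0 := by simpa using h
      have h2 : ((Complex.normSq a : ℂ)).re = ‖a‖ * ‖a‖ := by
        simp [Complex.normSq_eq_norm_sq, sq]
      rw [h2] at hle
      have h3 : ‖(starRingEnd ℂ) a‖ = ‖a‖ := by
        simp [Complex.norm_conj]
      rw [h3, Real.norm_eq_abs, _root_.abs_of_nonneg (by positivity)] at hle
      have := (norm_pos_iff.mpr h)
      nlinarith [this]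

noncomputable def QR.mulIm (a : ℂ) : ℂ →L[ℝ] ℝ :=
  Complex.imCLM.comp (((ContinuousLinearMap.mul ℂ ℂ) a).restrictScalars ℝ)

lemma QR.mulIm_apply (a v : ℂ) : QR.mulIm a v = (a * v).im := rfl

lemma QR.mulIm_eq (a : ℂ) : QR.mulIm a = QR.mulRe (-Complex.I * a) := by
  apply ContinuousLinearMap.ext
  intro v
  show (a * v).im = (-Complex.I * a * v).re
  simp [Complex.mul_re, Complex.mul_im]

lemma QR.norm_mulIm (a : ℂ) : ‖QR.mulIm a‖ = ‖a‖ := by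
  rw [QR.mulIm_eq, QR.norm_mulRe, norm_mul]
  simp

lemma QR.reC (x : ℂ) : (x.re : ℂ) = (x + (starRingEnd ℂ) x) / 2 := by
  rw [Complex.add_conj]; push_cast; ring

lemma QR.imC (x : ℂ) : (x.im : ℂ) = (x - (starRingEnd ℂ) x) / (2 * Complex.I) := by
  rw [Complex.sub_conj]
  field_simp
  push_cast
  ring

lemma QR.re_eq_re {x y : ℂ} (h : x + (starRingEnd ℂ) x = y + (starRingEnd ℂ) y) :
    x.re = y.re := by
  have := congrArg Complex.re h
  simp only [Complex.add_re, Complex.conj_re] at this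
  linarith

/-- Every `K`-quasiregular map `w = ρ S` (with `ρ = |w|`, `S = w/|w|`) satisfies
`ρ |∇S| ≤ K |∇ρ|` and `|∇ρ| ≤ K ρ |∇S|` at points of differentiability where `w ≠ 0`.
Quasiregularity is expressed by `|∂w| + |∂̄w| ≤ K ||∂w| - |∂̄w||` via Wirtinger
derivatives; `|∇S|` and `|∇ρ|` are operator norms of the real differentials. -/
theorem quasiregular_radial_angular_gradients (K : ℝ) (hK : 1 ≤ K) (w : ℂ → ℂ) (z : ℂ)
    (hd : DifferentiableAt ℝ w z) (hnz : w z ≠ 0)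
    (hqc : ‖(fderiv ℝ w z 1 - Complex.I * fderiv ℝ w z Complex.I) / 2‖
        + ‖(fderiv ℝ w z 1 + Complex.I * fderiv ℝ w z Complex.I) / 2‖
        ≤ K * |‖(fderiv ℝ w z 1 - Complex.I * fderiv ℝ w z Complex.I) / 2‖
            - ‖(fderiv ℝ w z 1 + Complex.I * fderiv ℝ w z Complex.I) / 2‖|) :
    ‖w z‖ * ‖fderiv ℝ (fun ζ => w ζ / ((‖w ζ‖ : ℝ) : ℂ)) z‖
        ≤ K * ‖fderiv ℝ (fun ζ => ‖w ζ‖) z‖ ∧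
    ‖fderiv ℝ (fun ζ => ‖w ζ‖) z‖
        ≤ K * (‖w z‖ * ‖fderiv ℝ (fun ζ => w ζ / ((‖w ζ‖ : ℝ) : ℂ)) z‖) := by
  have hA : HasFDerivAt w (fderiv ℝ w z) z := hd.hasFDerivAt
  set A := fderiv ℝ w z with hAdef
  set c := w z with hcdef
  set r := ‖c‖ with hrdef
  have hr0 : 0 < r := norm_pos_iff.mpr hnz
  have hrne : r ≠ 0 := ne_of_gt hr0
  have hrC : (r : ℂ) ≠ 0 := by exact_mod_cast hrne
  set S := c / (r : ℂ) with hSdef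
  have hcS : c = (r : ℂ) * S := by rw [hSdef, mul_div_assoc', mul_div_cancel_left₀ c hrC]
  have hSabs : ‖S‖ = 1 := by
    rw [hSdef, norm_div, Complex.norm_real, Real.norm_eq_abs, _root_.abs_of_nonneg hr0.le, ← hrdef, div_self hrne]
  have hst : (starRingEnd ℂ) S * S = 1 := by
    rw [mul_comm, Complex.mul_conj, Complex.normSq_eq_norm_sq, hSabs]
    norm_num
  set P := (A 1 - Complex.I * A Complex.I) / 2 with hPdef
  set Q := (A 1 + Complex.I * A Complex.I) / 2 with hQdef
  have hAv : ∀ v : ℂ, A v = P * v + Q * (starRingEnd ℂ) v := by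
    intro v
    have hv : v = (v.re : ℝ) • (1 : ℂ) + (v.im : ℝ) • Complex.I := by
      simp only [Complex.real_smul, mul_one]
      exact (Complex.re_add_im v).symm
    have hcv : (starRingEnd ℂ) v = (v.re : ℂ) - (v.im : ℂ) * Complex.I := by
      simp [Complex.ext_iff]
    calc A v = (v.re : ℝ) • A 1 + (v.im : ℝ) • A Complex.I := by
          conv_lhs => rw [hv]
          rw [map_add, map_smul, map_smul]
      _ = P * ((v.re : ℂ) + (v.im : ℂ) * Complex.I) + Q * ((v.re : ℂ) - (v.im : ℂ) * Complex.I) := by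
          rw [Complex.real_smul, Complex.real_smul, hPdef, hQdef]
          linear_combination ((v.im : ℂ) * A Complex.I) * Complex.I_mul_I
      _ = P * v + Q * (starRingEnd ℂ) v := by
          rw [Complex.re_add_im, ← hcv]
  set a := (starRingEnd ℂ) S * P + S * (starRingEnd ℂ) Q with hadef
  set d := (starRingEnd ℂ) S * P - S * (starRingEnd ℂ) Q with hddef
  -- derivative of ρ = |w ·|
  have hrho : HasFDerivAt (fun ζ => ‖w ζ‖) (QR.mulRe a) z := by
    have hre : HasFDerivAt (fun ζ => (w ζ).re) (Complex.reCLM.comp A) z :=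
      (Complex.reCLM.hasFDerivAt).comp z hA
    have him : HasFDerivAt (fun ζ => (w ζ).im) (Complex.imCLM.comp A) z :=
      (Complex.imCLM.hasFDerivAt).comp z hA
    have hnsq : HasFDerivAt (fun ζ => Complex.normSq (w ζ))
        ((c.re • (Complex.reCLM.comp A) + c.re • (Complex.reCLM.comp A)) +
         (c.im • (Complex.imCLM.comp A) + c.im • (Complex.imCLM.comp A))) z := by
      have heq : (fun ζ => Complex.normSq (w ζ))
          = fun ζ => (w ζ).re * (w ζ).re + (w ζ).im * (w ζ).im := by
        funext ζ; rw [Complex.normSq_apply]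
      rw [heq]
      exact (hre.mul hre).add (him.mul him)
    have hne : Complex.normSq c ≠ 0 := by
      simpa [Complex.normSq_eq_zero] using hnz
    have hsqrt := (Real.hasDerivAt_sqrt hne).comp_hasFDerivAt z hnsq
    have heq2 : (fun ζ => ‖w ζ‖) = fun ζ => Real.sqrt (Complex.normSq (w ζ)) := by
      funext ζ; exact Complex.norm_def _
    rw [heq2]
    refine hsqrt.congr_fderiv (Eq.symm ?_)
    apply ContinuousLinearMap.ext
    intro v
    have hsr : Real.sqrt (Complex.normSq c) = r := (Complex.norm_def c).symm
    have hcx : ((starRingEnd ℂ) c * A v).re = r * ((a * v).re) := by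
      have hc2 : (starRingEnd ℂ) c * A v + (starRingEnd ℂ) ((starRingEnd ℂ) c * A v)
          = ((r : ℂ) * (a * v)) + (starRingEnd ℂ) ((r : ℂ) * (a * v)) := by
        rw [hAv v, hcS, hadef]
        simp only [map_mul, map_add, Complex.conj_conj, Complex.conj_ofReal]
        ring
      have h5 := QR.re_eq_re hc2
      rw [h5]
      simp [Complex.mul_re]
    have hre2 : ((starRingEnd ℂ) c * A v).re = c.re * (A v).re + c.im * (A v).im := by
      simp [Complex.mul_re]
    simp only [ContinuousLinearMap.smul_apply, ContinuousLinearMap.add_apply,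
      ContinuousLinearMap.coe_comp', Function.comp_apply, Complex.reCLM_apply,
      Complex.imCLM_apply, QR.mulRe_apply, smul_eq_mul, hsr]
    rw [hre2] at hcx
    have h6 : (a * v).re = (c.re * (A v).re + c.im * (A v).im) / r := by
      rw [hcx]; field_simp
    rw [h6]; ring
  -- derivative of S-map
  have hSmap : HasFDerivAt (fun ζ => w ζ / ((‖w ζ‖ : ℝ) : ℂ))
      ((QR.mulIm d).smulRight (S * Complex.I * ((r : ℂ))⁻¹)) z := by
    have hrhoC : HasFDerivAt (fun ζ => ((‖w ζ‖ : ℝ) : ℂ))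
        (Complex.ofRealCLM.comp (QR.mulRe a)) z :=
      (Complex.ofRealCLM.hasFDerivAt).comp z hrho
    have hinv : HasFDerivAt (fun ζ => (((‖w ζ‖ : ℝ) : ℂ))⁻¹)
        ((-(ContinuousLinearMap.mulLeftRight ℝ ℂ ((r:ℂ))⁻¹ ((r:ℂ))⁻¹)).comp
          (Complex.ofRealCLM.comp (QR.mulRe a))) z :=
      (hasFDerivAt_inv' (𝕜 := ℝ) (x := (r : ℂ)) hrC).comp z hrhoC
    have hmul := hA.mul hinv
    have heq : (fun ζ => w ζ / ((‖w ζ‖ : ℝ) : ℂ))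
        = fun ζ => w ζ * (((‖w ζ‖ : ℝ) : ℂ))⁻¹ := by
      funext ζ; rw [div_eq_mul_inv]
    rw [heq]
    refine hmul.congr_fderiv (Eq.symm ?_)
    apply ContinuousLinearMap.ext
    intro v
    simp only [ContinuousLinearMap.smulRight_apply, ContinuousLinearMap.add_apply,
      ContinuousLinearMap.smul_apply, ContinuousLinearMap.coe_comp', Function.comp_apply,
      ContinuousLinearMap.neg_apply, ContinuousLinearMap.mulLeftRight_apply,
      Complex.ofRealCLM_apply, QR.mulRe_apply, QR.mulIm_apply, smul_eq_mul,
      Complex.real_smul]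
    rw [hAv v]
    rw [← hcdef, ← hrdef]
    rw [hcS, hadef, hddef, QR.imC, QR.reC]
    simp only [map_mul, map_add, map_sub, Complex.conj_conj, Complex.conj_ofReal]
    clear_value a d P Q S r c A
    field_simp
    linear_combination (2 * (P * v + Q * (starRingEnd ℂ) v)) * hst
  rw [hrho.fderiv, hSmap.fderiv, QR.norm_mulRe, ContinuousLinearMap.norm_smulRight_apply,
    QR.norm_mulIm]
  have hnormv : ‖S * Complex.I * ((r : ℂ))⁻¹‖ = r⁻¹ := by
    simp [norm_mul, hSabs, Complex.norm_I, norm_inv, Complex.norm_real,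
      _root_.abs_of_nonneg hr0.le]
  rw [hnormv]
  have hPabs : ‖(starRingEnd ℂ) S * P‖ = ‖P‖ := by
    rw [norm_mul, Complex.norm_conj, hSabs, one_mul]
  have hQabs : ‖S * (starRingEnd ℂ) Q‖ = ‖Q‖ := by
    rw [norm_mul, Complex.norm_conj, hSabs, one_mul]
  have key1 : ‖d‖ ≤ ‖P‖ + ‖Q‖ := by
    rw [hddef]
    calc ‖(starRingEnd ℂ) S * P - S * (starRingEnd ℂ) Q‖
        ≤ ‖(starRingEnd ℂ) S * P‖ + ‖S * (starRingEnd ℂ) Q‖ :=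
          by rw [sub_eq_add_neg]
             refine le_trans (norm_add_le _ _) ?_
             rw [norm_neg]
      _ = ‖P‖ + ‖Q‖ := by rw [hPabs, hQabs]
  have key2 : ‖a‖ ≤ ‖P‖ + ‖Q‖ := by
    rw [hadef]
    calc ‖(starRingEnd ℂ) S * P + S * (starRingEnd ℂ) Q‖
        ≤ ‖(starRingEnd ℂ) S * P‖ + ‖S * (starRingEnd ℂ) Q‖ :=
          norm_add_le _ _
      _ = ‖P‖ + ‖Q‖ := by rw [hPabs, hQabs]
  have key3 : |‖P‖ - ‖Q‖| ≤ ‖a‖ := by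
    rw [← hPabs, ← hQabs, hadef]
    have := abs_norm_sub_norm_le ((starRingEnd ℂ) S * P) (-(S * (starRingEnd ℂ) Q))
    rw [norm_neg, sub_neg_eq_add] at this
    exact this
  have key4 : |‖P‖ - ‖Q‖| ≤ ‖d‖ := by
    rw [← hPabs, ← hQabs, hddef]
    exact abs_norm_sub_norm_le _ _
  have hK0 : 0 ≤ K := le_trans zero_le_one hK
  constructor
  · have : r * (‖d‖ * r⁻¹) = ‖d‖ := by field_simp
    rw [this]
    calc ‖d‖ ≤ ‖P‖ + ‖Q‖ := key1
      _ ≤ K * |‖P‖ - ‖Q‖| := hqc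
      _ ≤ K * ‖a‖ := mul_le_mul_of_nonneg_left key3 hK0
  · have : r * (‖d‖ * r⁻¹) = ‖d‖ := by field_simp
    rw [this]
    calc ‖a‖ ≤ ‖P‖ + ‖Q‖ := key2
      _ ≤ K * |‖P‖ - ‖Q‖| := hqc
      _ ≤ K * ‖d‖ := mul_le_mul_of_nonneg_left key4 hK0
end

section
/- If w is a K-quasiregular map on a planar domain and ρ = |w|, then at almost every point, K⁻¹·|∇w| ≤ |∇ρ| ≤ |∇w|, where |∇w| is the operator norm of the differential of w and |∇ρ| the Euclidean norm of the gradient of ρ. -/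
open Complex

/-- If `w` is `K`-quasiregular and `ρ = |w|`, then at points of differentiability with
`w ≠ 0`, `K⁻¹ |∇w| ≤ |∇ρ| ≤ |∇w|`, where `|∇w|` is the operator norm of the real
differential of `w` and `|∇ρ|` that of `ρ`. -/
theorem quasiregular_gradient_modulus (K : ℝ) (hK : 1 ≤ K) (w : ℂ → ℂ) (z : ℂ)
    (hd : DifferentiableAt ℝ w z) (hnz : w z ≠ 0)
    (hqc : ‖fderiv ℝ w z‖
        ≤ K * |‖(fderiv ℝ w z 1 - Complex.I * fderiv ℝ w z Complex.I) / 2‖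
            - ‖(fderiv ℝ w z 1 + Complex.I * fderiv ℝ w z Complex.I) / 2‖|) :
    K⁻¹ * ‖fderiv ℝ w z‖ ≤ ‖fderiv ℝ (fun ζ => ‖w ζ‖) z‖ ∧
    ‖fderiv ℝ (fun ζ => ‖w ζ‖) z‖ ≤ ‖fderiv ℝ w z‖ := by
  set D := fderiv ℝ w z with hDdef
  set c := w z with hcdef
  have hc0 : ‖c‖ ≠ 0 := norm_ne_zero_iff.mpr hnz
  have hcpos : (0:ℝ) < ‖c‖ := norm_pos_iff.mpr hnz
  have hsq : ‖c‖ ^ 2 ≠ 0 := pow_ne_zero _ hc0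
  -- derivative of ρ
  have h1 : HasFDerivAt (fun ζ => ‖w ζ‖ ^ 2) (2 • (innerSL ℝ c).comp D) z :=
    hd.hasFDerivAt.norm_sq
  have h2 := h1.sqrt hsq
  have heq : (fun ζ => Real.sqrt (‖w ζ‖ ^ 2)) = fun ζ => ‖w ζ‖ := by
    funext ζ
    rw [Real.sqrt_sq (norm_nonneg _)]
  rw [heq] at h2
  set L := fderiv ℝ (fun ζ => ‖w ζ‖) z with hLdef
  have hρ : L = (1 / (2 * Real.sqrt (‖c‖ ^ 2))) • (2 • (innerSL ℝ c).comp D) := h2.fderiv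
  have hL : ∀ v, L v = ((starRingEnd ℂ) c * D v).re / ‖c‖ := by
    intro v
    rw [hρ]
    simp only [ContinuousLinearMap.smul_apply, ContinuousLinearMap.comp_apply,
      innerSL_apply_apply, Complex.inner, Real.sqrt_sq (norm_nonneg c), smul_eq_mul]
    field_simp
    rw [mul_comm (D v)]
    exact (two_nsmul _).trans (two_mul _).symm
  constructor
  · -- lower bound
    set p := D 1 with hp
    set q := D Complex.I with hq
    set f := (p - Complex.I * q) / 2 with hf
    set g := (p + Complex.I * q) / 2 with hg
    have hDv : ∀ v : ℂ, D v = f * v + g * (starRingEnd ℂ) v := by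
      intro v
      have h1 : D v = (v.re : ℂ) * p + (v.im : ℂ) * q := by
        conv_lhs => rw [show v = v.re • (1 : ℂ) + v.im • Complex.I by
          simp [Complex.real_smul, Complex.re_add_im]]
        rw [map_add, map_smul, map_smul]
        simp [Complex.real_smul, hp, hq]
      have h2 : (starRingEnd ℂ) v = (v.re : ℂ) - (v.im : ℂ) * Complex.I := by
        conv_lhs => rw [← Complex.re_add_im v]
        rw [map_add, map_mul, Complex.conj_ofReal, Complex.conj_ofReal, Complex.conj_I]
        ring
      have h3 : v = (v.re : ℂ) + (v.im : ℂ) * Complex.I := (Complex.re_add_im v).symm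
      rw [h1, h2, hf, hg]
      linear_combination (-(p - Complex.I * q) / 2) * h3 + ((v.im : ℂ) * q) * Complex.I_sq
    set S := (starRingEnd ℂ) c * f + (starRingEnd ℂ) ((starRingEnd ℂ) c * g) with hS
    have hLS : ∀ v, L v = (S * v).re / ‖c‖ := by
      intro v
      rw [hL v, hDv v]
      congr 1
      have key : (starRingEnd ℂ) c * (f * v + g * (starRingEnd ℂ) v)
          = (starRingEnd ℂ) c * f * v + (starRingEnd ℂ) c * g * (starRingEnd ℂ) v := by
        ring
      rw [key, Complex.add_re, hS, add_mul, Complex.add_re]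
      congr 1
      conv_lhs => rw [← Complex.conj_re ((starRingEnd ℂ) c * g * (starRingEnd ℂ) v)]
      rw [map_mul, Complex.conj_conj]
    -- |abs f - abs g| ≤ abs S / ‖c‖
    have habs : |‖f‖ - ‖g‖| * ‖c‖ ≤ ‖S‖ := by
      have h1 : |‖(starRingEnd ℂ) c * f‖
          - ‖-((starRingEnd ℂ) ((starRingEnd ℂ) c * g))‖| ≤ ‖S‖ := by
        have := abs_norm_sub_norm_le ((starRingEnd ℂ) c * f)
          (-((starRingEnd ℂ) ((starRingEnd ℂ) c * g)))
        simpa [hS, sub_neg_eq_add] using this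
      have e1 : ‖(starRingEnd ℂ) c * f‖ = ‖c‖ * ‖f‖ := by
        rw [norm_mul, Complex.norm_conj]
      have e2 : ‖-((starRingEnd ℂ) ((starRingEnd ℂ) c * g))‖
          = ‖c‖ * ‖g‖ := by
        rw [norm_neg, Complex.norm_conj, norm_mul, Complex.norm_conj]
      rw [e1, e2, ← mul_sub, abs_mul, _root_.abs_of_nonneg (norm_nonneg c)] at h1
      linarith [h1]
    -- abs S / ‖c‖ ≤ ‖L‖
    have hSL : ‖S‖ / ‖c‖ ≤ ‖L‖ := by
      rcases eq_or_ne S 0 with h | h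
      · simp [h, norm_nonneg]
      · set v₀ : ℂ := (‖S‖ : ℂ)⁻¹ * (starRingEnd ℂ) S with hv₀
        have hv₀norm : ‖v₀‖ = 1 := by
          rw [hv₀]
          simp [norm_mul, Complex.norm_conj,
            inv_mul_cancel₀ (norm_ne_zero_iff.mpr h)]
        have hval : L v₀ = ‖S‖ / ‖c‖ := by
          rw [hLS v₀, hv₀]
          have hmul : S * ((‖S‖ : ℂ)⁻¹ * (starRingEnd ℂ) S)
              = ((‖S‖ : ℂ)) := by
            rw [mul_comm ((‖S‖ : ℂ))⁻¹ _, ← mul_assoc, Complex.mul_conj,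
              Complex.normSq_eq_norm_sq, sq]
            push_cast
            rw [mul_assoc, mul_inv_cancel₀, mul_one]
            exact_mod_cast norm_ne_zero_iff.mpr h
          rw [hmul, Complex.ofReal_re]
        calc ‖S‖ / ‖c‖ = ‖L v₀‖ := by rw [hval]; simp [_root_.abs_of_nonneg,
              div_nonneg (norm_nonneg S) (norm_nonneg c)]
          _ ≤ ‖L‖ * ‖v₀‖ := L.le_opNorm v₀
          _ = ‖L‖ := by rw [hv₀norm, mul_one]
    have hK0 : (0:ℝ) < K := lt_of_lt_of_le one_pos hK
    have : K⁻¹ * ‖D‖ ≤ |‖f‖ - ‖g‖| := by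
      rw [inv_mul_le_iff₀ hK0]
      exact hqc
    calc K⁻¹ * ‖D‖ ≤ |‖f‖ - ‖g‖| := this
      _ ≤ ‖S‖ / ‖c‖ := by
          rw [le_div_iff₀ hcpos]; exact habs
      _ ≤ ‖L‖ := hSL
  · -- upper bound
    apply ContinuousLinearMap.opNorm_le_bound _ (norm_nonneg D)
    intro v
    rw [hL v]
    have h1 : |((starRingEnd ℂ) c * D v).re| ≤ ‖c‖ * ‖D v‖ := by
      calc |((starRingEnd ℂ) c * D v).re| ≤ ‖(starRingEnd ℂ) c * D v‖ :=
            Complex.abs_re_le_norm _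
        _ = ‖c‖ * ‖D v‖ := by
            rw [norm_mul, Complex.norm_conj]
    rw [Real.norm_eq_abs, abs_div, _root_.abs_of_nonneg (norm_nonneg c)]
    rw [div_le_iff₀ hcpos]
    calc |((starRingEnd ℂ) c * D v).re| ≤ ‖c‖ * ‖D v‖ := h1
      _ ≤ ‖c‖ * (‖D‖ * ‖v‖) := by
          exact mul_le_mul_of_nonneg_left (D.le_opNorm v) (norm_nonneg c)
      _ = ‖D‖ * ‖v‖ * ‖c‖ := by ring
end

section
/- Let w = ρ·S : U → U be twice differentiable with ρ = |w| and |S| = 1, and let L[u] = Σ a^{ij}(z) D_{ij} u with A symmetric. Then L[ρ] = ρ·(a^{11}|p|² + 2a^{12}⟨p,q⟩ + a^{22}|q|²) + ⟨L[w], S⟩, where p = D₁S, q = D₂S ∈ ℝ² (identifying S with an ℝ²-valued map) and ⟨L[w], S⟩ is the real inner product of the ℝ²-valued vector L[w] with S. -/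
/-- Second derivative of a complex-valued function of a complex variable in the real
directions `e₁`, `e₂`. -/
noncomputable def D2c (f : ℂ → ℂ) (e₁ e₂ z : ℂ) : ℂ :=
  fderiv ℝ (fun y => fderiv ℝ f y e₁) z e₂

/-- Second derivative of a real-valued function of a complex variable in the real
directions `e₁`, `e₂`. -/
noncomputable def D2r (f : ℂ → ℝ) (e₁ e₂ z : ℂ) : ℝ :=
  fderiv ℝ (fun y => fderiv ℝ f y e₁) z e₂



section
variable {w : ℂ → ℂ} {y z : ℂ}


lemma fderiv_abs_comp_apply {w : ℂ → ℂ} {y : ℂ} (hw : DifferentiableAt ℝ w y)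
    (hy : w y ≠ 0) (v : ℂ) :
    fderiv ℝ (fun ζ => ‖w ζ‖) y v
      = (fderiv ℝ w y v * (starRingEnd ℂ) (w y / (‖w y‖ : ℂ))).re := by
  have hny : ‖w y‖ ≠ 0 := norm_ne_zero_iff.2 hy
  have hsq : HasFDerivAt (fun ζ => ‖w ζ‖ ^ 2) (2 • (innerSL ℝ (w y)).comp (fderiv ℝ w y)) y :=
    hw.hasFDerivAt.norm_sq
  have hpos : (0:ℝ) < ‖w y‖ ^ 2 := by positivity
  have hsqrt : HasDerivAt Real.sqrt (1 / (2 * Real.sqrt (‖w y‖ ^ 2))) (‖w y‖ ^ 2) :=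
    Real.hasDerivAt_sqrt hpos.ne'
  have hcomp := hsqrt.comp_hasFDerivAt y hsq
  have hfun : (fun ζ => ‖w ζ‖) = Real.sqrt ∘ fun ζ => ‖w ζ‖ ^ 2 :=
    funext fun ζ => by simp [Real.sqrt_sq (norm_nonneg _)]
  rw [hfun, hcomp.fderiv]
  simp only [ContinuousLinearMap.smul_apply, ContinuousLinearMap.comp_apply,
    innerSL_apply_apply, smul_eq_mul, Complex.inner, Real.sqrt_sq (norm_nonneg _)]
  rw [map_div₀, Complex.conj_ofReal, mul_comm ((fderiv ℝ w y) v) ((starRingEnd ℂ) (w y) / (‖w y‖ : ℂ)),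
    div_mul_eq_mul_div ((starRingEnd ℂ) (w y)) ((‖w y‖ : ℂ)) ((fderiv ℝ w y) v),
    Complex.div_re, Complex.ofReal_re, Complex.ofReal_im, Complex.normSq_ofReal]
  rw [show (‖w y‖ : ℝ) = ‖w y‖ from rfl]
  simp only [nsmul_eq_mul, Nat.cast_ofNat]
  have hab : ‖w y‖ ≠ 0 := hny
  field_simp
  ring

lemma diffAt_abs_comp (hw : DifferentiableAt ℝ w y) (hy : w y ≠ 0) :
    DifferentiableAt ℝ (fun ζ => ‖w ζ‖) y := by
  simpa using hw.norm ℝ hy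

lemma diffAt_S (hw : DifferentiableAt ℝ w y) (hy : w y ≠ 0) :
    DifferentiableAt ℝ (fun ζ => w ζ / (‖w ζ‖ : ℂ)) y := by
  have h2 : DifferentiableAt ℝ (fun ζ => ((‖w ζ‖ : ℝ) : ℂ)) y :=
    Complex.ofRealCLM.differentiableAt.comp y (diffAt_abs_comp hw hy)
  have h3 : DifferentiableAt ℝ (fun ζ => ((‖w ζ‖ : ℂ))⁻¹) y := by
    refine h2.inv ?_
    show ((‖w y‖ : ℝ) : ℂ) ≠ 0
    simpa using norm_ne_zero_iff.2 hy
  simpa only [div_eq_mul_inv] using hw.fun_mul h3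

lemma fderiv_w_eq (hw1 : Differentiable ℝ w) (hwz : w z ≠ 0) (v : ℂ) :
    fderiv ℝ w z v
      = (fderiv ℝ (fun ζ => ‖w ζ‖) z v : ℂ) * (w z / (‖w z‖ : ℂ))
        + (‖w z‖ : ℂ) * fderiv ℝ (fun ζ => w ζ / (‖w ζ‖ : ℂ)) z v := by
  have hev : ∀ᶠ y in nhds z, w y ≠ 0 := hw1.continuous.continuousAt.eventually_ne hwz
  have heq : w =ᶠ[nhds z] fun y => ((‖w y‖ : ℂ)) * (w y / (‖w y‖ : ℂ)) :=
    hev.mono fun y hy => by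
      have h : (‖w y‖ : ℂ) ≠ 0 := by simpa using norm_ne_zero_iff.2 hy
      show w y = _
      field_simp
  have habs := diffAt_abs_comp (hw1 z) hwz
  have hρc : HasFDerivAt (fun ζ => ((‖w ζ‖ : ℝ) : ℂ))
      (Complex.ofRealCLM.comp (fderiv ℝ (fun ζ => ‖w ζ‖) z)) z :=
    Complex.ofRealCLM.hasFDerivAt.comp z habs.hasFDerivAt
  have hmul := hρc.mul (diffAt_S (hw1 z) hwz).hasFDerivAt
  rw [heq.fderiv_eq, show (fun y => ((‖w y‖ : ℂ)) * (w y / (‖w y‖ : ℂ))) =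
      ((fun ζ => ((‖w ζ‖ : ℝ) : ℂ)) * fun ζ => w ζ / (‖w ζ‖ : ℂ)) from rfl, hmul.fderiv]
  simp [smul_eq_mul]
  ring

lemma orth (hw1 : Differentiable ℝ w) (hwz : w z ≠ 0) (v : ℂ) :
    ((w z / (‖w z‖ : ℂ)) *
      (starRingEnd ℂ) (fderiv ℝ (fun ζ => w ζ / (‖w ζ‖ : ℂ)) z v)).re = 0 := by
  have hev : ∀ᶠ y in nhds z, w y ≠ 0 := hw1.continuous.continuousAt.eventually_ne hwz
  have hS : DifferentiableAt ℝ (fun ζ => w ζ / (‖w ζ‖ : ℂ)) z := diffAt_S (hw1 z) hwz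
  have hone : (fun y => ‖w y / (‖w y‖ : ℂ)‖ ^ 2) =ᶠ[nhds z] fun _ => (1 : ℝ) :=
    hev.mono fun y hy => by
      simp [norm_div, Complex.norm_real,
        abs_of_nonneg (norm_nonneg (w y)),
        div_self (norm_ne_zero_iff.2 hy)]
  have hsq := hS.hasFDerivAt.norm_sq
  have h0 : fderiv ℝ (fun y => ‖w y / (‖w y‖ : ℂ)‖ ^ 2) z = 0 := by
    rw [hone.fderiv_eq]; exact fderiv_const_apply 1
  have h2 : (2 • (innerSL ℝ (w z / (‖w z‖ : ℂ))).comp (fderiv ℝ (fun ζ => w ζ / (‖w ζ‖ : ℂ)) z)) v = 0 := by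
    rw [← hsq.fderiv, h0]; rfl
  simp only [ContinuousLinearMap.smul_apply, ContinuousLinearMap.comp_apply,
    innerSL_apply_apply, Complex.inner, nsmul_eq_mul, smul_eq_mul] at h2
  simp only [Complex.mul_re, Complex.conj_re, Complex.conj_im] at h2 ⊢
  linarith

end


lemma d2r_abs {w : ℂ → ℂ} (hw : ContDiff ℝ 2 w) {z : ℂ} (hwz : w z ≠ 0) (e f : ℂ) :
    D2r (fun ζ => ‖w ζ‖) e f z
      = ‖w z‖ *
          (fderiv ℝ (fun ζ => w ζ / (‖w ζ‖ : ℂ)) z e *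
            (starRingEnd ℂ) (fderiv ℝ (fun ζ => w ζ / (‖w ζ‖ : ℂ)) z f)).re
        + (D2c w e f z * (starRingEnd ℂ) (w z / (‖w z‖ : ℂ))).re := by
  have hw1 : Differentiable ℝ w := hw.differentiable (by norm_num)
  have hev : ∀ᶠ y in nhds z, w y ≠ 0 := hw1.continuous.continuousAt.eventually_ne hwz
  have h1 : (fun y => fderiv ℝ (fun ζ => ‖w ζ‖) y e) =ᶠ[nhds z]
      (fun y => (fderiv ℝ w y e *
        (starRingEnd ℂ) (w y / (‖w y‖ : ℂ))).re) :=
    hev.mono fun y hy => fderiv_abs_comp_apply (hw1 y) hy e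
  have hA : DifferentiableAt ℝ (fun y => fderiv ℝ w y e) z :=
    (((hw.fderiv_right (m := 1) le_rfl).differentiable one_ne_zero) z).clm_apply
      (differentiableAt_const e)
  have hS : DifferentiableAt ℝ (fun ζ => w ζ / (‖w ζ‖ : ℂ)) z :=
    diffAt_S (hw1 z) hwz
  have hconj : HasFDerivAt (fun y => (starRingEnd ℂ) (w y / (‖w y‖ : ℂ)))
      ((Complex.conjCLE : ℂ →L[ℝ] ℂ).comp
        (fderiv ℝ (fun ζ => w ζ / (‖w ζ‖ : ℂ)) z)) z :=
    (Complex.conjCLE : ℂ →L[ℝ] ℂ).hasFDerivAt.comp z hS.hasFDerivAt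
  have hmul := hA.hasFDerivAt.mul hconj
  have hre : HasFDerivAt (fun y => (fderiv ℝ w y e *
        (starRingEnd ℂ) (w y / (‖w y‖ : ℂ))).re)
      (Complex.reCLM.comp ((fderiv ℝ w z e) • ((Complex.conjCLE : ℂ →L[ℝ] ℂ).comp
          (fderiv ℝ (fun ζ => w ζ / (‖w ζ‖ : ℂ)) z)) +
        (starRingEnd ℂ) (w z / (‖w z‖ : ℂ)) •
          fderiv ℝ (fun y => fderiv ℝ w y e) z)) z :=
    Complex.reCLM.hasFDerivAt.comp z hmul
  have h2 : D2r (fun ζ => ‖w ζ‖) e f z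
      = (fderiv ℝ w z e *
          (starRingEnd ℂ) (fderiv ℝ (fun ζ => w ζ / (‖w ζ‖ : ℂ)) z f)).re
        + (D2c w e f z * (starRingEnd ℂ) (w z / (‖w z‖ : ℂ))).re := by
    show fderiv ℝ _ z f = _
    rw [h1.fderiv_eq, hre.fderiv]
    simp only [ContinuousLinearMap.comp_apply, ContinuousLinearMap.add_apply,
      ContinuousLinearMap.smul_apply, Complex.reCLM_apply, ContinuousLinearEquiv.coe_coe,
      Complex.conjCLE_apply, smul_eq_mul, Complex.add_re, D2c]
    rw [mul_comm ((starRingEnd ℂ) (w z / (‖w z‖ : ℂ)))]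
  rw [h2, fderiv_w_eq hw1 hwz e, add_mul, Complex.add_re,
    mul_assoc, mul_assoc, Complex.re_ofReal_mul, Complex.re_ofReal_mul,
    orth hw1 hwz f, mul_zero, zero_add]

/-- For a twice differentiable `w = ρ S : U → U` with `ρ = |w|`, `|S| = 1`, and the
elliptic operator `L[u] = Σ a^{ij} D_{ij} u` with symmetric coefficients,
`L[ρ] = ρ (a^{11}|p|² + 2a^{12}⟨p,q⟩ + a^{22}|q|²) + ⟨L[w], S⟩`,
where `p = D₁ S`, `q = D₂ S`. -/
theorem elliptic_operator_of_modulus (A : ℂ → Matrix (Fin 2) (Fin 2) ℝ)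
    (hsymm : ∀ z, (A z).IsSymm)
    (w : ℂ → ℂ) (hw : ContDiff ℝ 2 w)
    (hmap : ∀ z, ‖z‖ < 1 → ‖w z‖ < 1)
    (z : ℂ) (hz : ‖z‖ < 1) (hwz : w z ≠ 0) :
    A z 0 0 * D2r (fun ζ => ‖w ζ‖) 1 1 z
      + A z 0 1 * D2r (fun ζ => ‖w ζ‖) 1 Complex.I z
      + A z 1 0 * D2r (fun ζ => ‖w ζ‖) Complex.I 1 z
      + A z 1 1 * D2r (fun ζ => ‖w ζ‖) Complex.I Complex.I z
    = ‖w z‖ *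
        (A z 0 0 * ‖fderiv ℝ (fun ζ => w ζ / (‖w ζ‖ : ℂ)) z 1‖ ^ 2
          + 2 * A z 0 1 *
            (fderiv ℝ (fun ζ => w ζ / (‖w ζ‖ : ℂ)) z 1 *
              (starRingEnd ℂ)
                (fderiv ℝ (fun ζ => w ζ / (‖w ζ‖ : ℂ)) z Complex.I)).re
          + A z 1 1 *
            ‖fderiv ℝ (fun ζ => w ζ / (‖w ζ‖ : ℂ)) z Complex.I‖ ^ 2)
      + ((A z 0 0 • D2c w 1 1 z + A z 0 1 • D2c w 1 Complex.I z
          + A z 1 0 • D2c w Complex.I 1 z + A z 1 1 • D2c w Complex.I Complex.I z) *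
            (starRingEnd ℂ) (w z / (‖w z‖ : ℂ))).re := by
  rw [d2r_abs hw hwz 1 1, d2r_abs hw hwz 1 Complex.I, d2r_abs hw hwz Complex.I 1,
    d2r_abs hw hwz Complex.I Complex.I]
  have hsym : A z 1 0 = A z 0 1 := (hsymm z).apply 0 1
  rw [hsym]
  simp only [add_mul, Complex.add_re, Complex.add_im, Complex.mul_re, Complex.mul_im,
    Complex.conj_re, Complex.conj_im, Complex.real_smul, Complex.ofReal_re, Complex.ofReal_im,
    Complex.sq_norm, Complex.normSq_apply]
  ring
end

section
/- Let f = u + iv be differentiable at a point with Jacobian matrix satisfying |f_{z̄}| ≤ k·|f_z| for some 0 ≤ k < 1 and f_z ≠ 0. Then the gradients of the real and imaginary parts satisfy ((1-k)/(1+k))² ≤ |∇u|²/|∇v|² ≤ ((1+k)/(1-k))², where |∇u|² = 2(|u_z|² + |u_{z̄}|²). -/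
set_option maxHeartbeats 1000000


/-- If `f = u + iv` is real-differentiable at a point with `|f_z̄| ≤ k |f_z|`,
`0 ≤ k < 1`, `f_z ≠ 0`, then
`((1-k)/(1+k))² ≤ |∇u|²/|∇v|² ≤ ((1+k)/(1-k))²`,
where `|∇u|² = u_x² + u_y²` (equivalently `2(|u_z|² + |u_z̄|²)`). -/
theorem gradient_ratio_of_parts (f : ℂ → ℂ) (z : ℂ) (k : ℝ) (hk0 : 0 ≤ k) (hk1 : k < 1)
    (hd : DifferentiableAt ℝ f z)
    (hfz : (fderiv ℝ f z 1 - Complex.I * fderiv ℝ f z Complex.I) / 2 ≠ 0)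
    (hqc : ‖(fderiv ℝ f z 1 + Complex.I * fderiv ℝ f z Complex.I) / 2‖
        ≤ k * ‖(fderiv ℝ f z 1 - Complex.I * fderiv ℝ f z Complex.I) / 2‖) :
    ((1 - k) / (1 + k)) ^ 2
        ≤ ((fderiv ℝ (fun ζ => (f ζ).re) z 1) ^ 2 + (fderiv ℝ (fun ζ => (f ζ).re) z Complex.I) ^ 2)
          / ((fderiv ℝ (fun ζ => (f ζ).im) z 1) ^ 2
            + (fderiv ℝ (fun ζ => (f ζ).im) z Complex.I) ^ 2) ∧
    ((fderiv ℝ (fun ζ => (f ζ).re) z 1) ^ 2 + (fderiv ℝ (fun ζ => (f ζ).re) z Complex.I) ^ 2)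
        / ((fderiv ℝ (fun ζ => (f ζ).im) z 1) ^ 2
          + (fderiv ℝ (fun ζ => (f ζ).im) z Complex.I) ^ 2)
      ≤ ((1 + k) / (1 - k)) ^ 2 := by
  have hre : fderiv ℝ (fun ζ => (f ζ).re) z = Complex.reCLM.comp (fderiv ℝ f z) :=
    (Complex.reCLM.hasFDerivAt.comp z hd.hasFDerivAt).fderiv
  have him : fderiv ℝ (fun ζ => (f ζ).im) z = Complex.imCLM.comp (fderiv ℝ f z) :=
    (Complex.imCLM.hasFDerivAt.comp z hd.hasFDerivAt).fderiv
  rw [hre, him]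
  simp only [ContinuousLinearMap.comp_apply, Complex.reCLM_apply, Complex.imCLM_apply]
  set A := fderiv ℝ f z 1 with hA
  set B := fderiv ℝ f z Complex.I with hB
  set p : ℂ := (A - Complex.I * B) / 2 with hp
  set q : ℂ := (A + Complex.I * B) / 2 with hq
  have hu : A.re ^ 2 + B.re ^ 2 = ‖p + starRingEnd ℂ q‖ ^ 2 := by
    rw [Complex.sq_norm, Complex.normSq_apply]
    simp [hp, hq, Complex.add_re, Complex.add_im, Complex.sub_re, Complex.sub_im,
      Complex.div_re, Complex.div_im, Complex.mul_re, Complex.mul_im, Complex.normSq_apply]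
    ring
  have hv : A.im ^ 2 + B.im ^ 2 = ‖p - starRingEnd ℂ q‖ ^ 2 := by
    rw [Complex.sq_norm, Complex.normSq_apply]
    simp [hp, hq, Complex.add_re, Complex.add_im, Complex.sub_re, Complex.sub_im,
      Complex.div_re, Complex.div_im, Complex.mul_re, Complex.mul_im, Complex.normSq_apply]
    ring
  rw [hu, hv]
  set x := ‖p + starRingEnd ℂ q‖ with hx
  set y := ‖p - starRingEnd ℂ q‖ with hy
  set a := ‖p‖ with ha
  have hap : 0 < a := norm_pos_iff.mpr hfz
  have haq : ‖q‖ ≤ k * a := hqc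
  have hcq : ‖starRingEnd ℂ q‖ = ‖q‖ := Complex.norm_conj q
  have hx_lb : (1 - k) * a ≤ x := by
    have h1 : a ≤ x + ‖q‖ := by
      calc a = ‖(p + starRingEnd ℂ q) - starRingEnd ℂ q‖ := by
            rw [add_sub_cancel_right]
        _ ≤ x + ‖starRingEnd ℂ q‖ := by
            simpa [sub_eq_add_neg] using norm_add_le (p + starRingEnd ℂ q) (-(starRingEnd ℂ q))
        _ = x + ‖q‖ := by rw [hcq]
    linarith
  have hx_ub : x ≤ (1 + k) * a := by
    have h1 : x ≤ a + ‖q‖ := by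
      calc x ≤ a + ‖starRingEnd ℂ q‖ := norm_add_le _ _
        _ = a + ‖q‖ := by rw [hcq]
    linarith
  have hy_lb : (1 - k) * a ≤ y := by
    have h1 : a ≤ y + ‖q‖ := by
      calc a = ‖(p - starRingEnd ℂ q) + starRingEnd ℂ q‖ := by
            rw [sub_add_cancel]
        _ ≤ y + ‖starRingEnd ℂ q‖ := norm_add_le _ _
        _ = y + ‖q‖ := by rw [hcq]
    linarith
  have hy_ub : y ≤ (1 + k) * a := by
    have h1 : y ≤ a + ‖q‖ := by
      calc y ≤ a + ‖starRingEnd ℂ q‖ := by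
            simpa [sub_eq_add_neg, hy, ha] using norm_add_le p (-(starRingEnd ℂ q))
        _ = a + ‖q‖ := by rw [hcq]
    linarith
  have h1k : 0 < 1 - k := by linarith
  have h1k' : 0 < 1 + k := by linarith
  have hxpos : 0 < x := lt_of_lt_of_le (by positivity) hx_lb
  have hypos : 0 < y := lt_of_lt_of_le (by positivity) hy_lb
  constructor
  · rw [div_pow, div_le_div_iff₀ (by positivity) (by positivity)]
    nlinarith [mul_le_mul hy_ub hy_ub (by positivity) (by positivity),
      mul_le_mul hx_lb hx_lb (by positivity) hxpos.le, sq_nonneg a]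
  · rw [div_pow, div_le_div_iff₀ (by positivity) (by positivity)]
    nlinarith [mul_le_mul hx_ub hx_ub (by positivity) (by positivity),
      mul_le_mul hy_lb hy_lb (by positivity) hypos.le, sq_nonneg a]
end
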